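/- arXiv:1611.01050 — 8 statements merged into one kernel-verified Lean document; each statement's English description precedes it below -/
import Mathlib

section
/- Let $(M = G/H, \rho)$ be a geodesic orbit Riemannian space with reductive decomposition $\mathfrak{g} = \mathfrak{h} \oplus \mathfrak{m}$ and invariant inner product $(\cdot,\cdot)$ on $\mathfrak{m}$, and let $\mathfrak{m} = \mathfrak{p} \oplus \mathfrak{q}$ be a $(\cdot,\cdot)$-orthogonal $\operatorname{Ad}(H)$-invariant decomposition. Then for every $X \in \mathfrak{p}$ the operator $Y \mapsto ([X,Y]_{\mathfrak{m}})_{\mathfrak{q}}$ on $\mathfrak{q}$ is skew-symmetric with respect to $(\cdot,\cdot)$, and $U(\mathfrak{q},\mathfrak{q}) \subseteq \mathfrak{q}$. -/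
/-!
Apply the GO-property to `Y ∈ 𝔮`: it yields `Z ∈ 𝔥` with `([Y + Z, X]_𝔪, Y) = 0` for `X ∈ 𝔭`.
Since `[Z, X] ∈ 𝔭 ⊥ 𝔮`, this says that the quadratic form `Y ↦ ([X, Y]_𝔪, Y)` vanishes on `𝔮`,
and polarizing gives the skew-symmetry. For `X, Y ∈ 𝔮` and `W ∈ 𝔭`, the defining identity of `U`
and this skew-symmetry give `2 (U(X, Y), W) = 0`; so `U(X, Y) ∈ 𝔪` is orthogonal to `𝔭`, hence
lies in `𝔮` because `(·,·)` is definite on `𝔭`.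
-/

section

variable {R L : Type*} [CommRing R] [LieRing L] [LieAlgebra R L]

/-- The Kowalski–Vanhecke form of the geodesic orbit property of `𝔤 = 𝔥 ⊕ 𝔪`. -/
def HasGOProperty (h : LieSubalgebra R L) (m : Submodule R L) (Φ : LinearMap.BilinForm R L)
    (πm : L →ₗ[R] L) : Prop :=
  ∀ X ∈ m, ∃ Z ∈ h, ∀ Y ∈ m, Φ (πm ⁅X + Z, Y⁆) X = 0

theorem LinearMap.BilinForm.apply_eq_neg_apply_of_apply_self_eq_zero {M : Type*}
    [AddCommGroup M] [Module R M] (B : LinearMap.BilinForm R M) {q : Submodule R M}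
    (hB : ∀ y ∈ q, B y y = 0) {y y' : M} (hy : y ∈ q) (hy' : y' ∈ q) : B y y' = -B y' y := by
  have hAlt : (B.restrict q).IsAlt := fun z => hB z z.2
  exact (hAlt.neg_eq ⟨y', hy'⟩ ⟨y, hy⟩).symm

theorem LinearMap.BilinForm.mem_of_mem_sup_of_forall_apply_eq_zero {M : Type*}
    [AddCommGroup M] [Module R M] {Φ : LinearMap.BilinForm R M} (hΦ : Φ.IsSymm)
    {p q : Submodule R M} (hanis : ∀ x ∈ p, Φ x x = 0 → x = 0)
    (horth : ∀ x ∈ p, ∀ y ∈ q, Φ x y = 0) {v : M} (hv : v ∈ p ⊔ q)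
    (hvp : ∀ w ∈ p, Φ v w = 0) : v ∈ q := by
  obtain ⟨P, hP, Q, hQ, rfl⟩ := Submodule.mem_sup.mp hv
  have hPP : Φ P P = 0 := by
    have hQP : Φ Q P = 0 := by rw [hΦ.eq]; exact horth P hP Q hQ
    simpa [hQP] using hvp P hP
  rwa [hanis P hP hPP, zero_add]

section GOSpace

variable {h : LieSubalgebra R L} {m : Submodule R L} {Φ : LinearMap.BilinForm R L}
  {πm : L →ₗ[R] L} {p q : Submodule R L}

theorem HasGOProperty.apply_proj_lie_self_eq_zero (hGO : HasGOProperty h m Φ πm)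
    (hπid : ∀ x ∈ m, πm x = x) (hpm : p ≤ m) (hqm : q ≤ m)
    (horth : ∀ x ∈ p, ∀ y ∈ q, Φ x y = 0) (hpinv : ∀ Z ∈ h, ∀ x ∈ p, ⁅Z, x⁆ ∈ p)
    {X Y : L} (hX : X ∈ p) (hY : Y ∈ q) : Φ (πm ⁅X, Y⁆) Y = 0 := by
  obtain ⟨Z, hZ, hGOY⟩ := hGO Y (hqm hY)
  have hZX : ⁅Z, X⁆ ∈ p := hpinv Z hZ X hX
  have hYX : Φ (πm ⁅Y, X⁆) Y = 0 := by
    simpa [add_lie, hπid _ (hpm hZX), horth _ hZX Y hY] using hGOY X (hpm hX)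
  rw [← lie_skew, map_neg, map_neg, LinearMap.neg_apply, hYX, neg_zero]

theorem HasGOProperty.apply_proj_lie_eq_neg (hGO : HasGOProperty h m Φ πm)
    (hπid : ∀ x ∈ m, πm x = x) (hpm : p ≤ m) (hqm : q ≤ m)
    (horth : ∀ x ∈ p, ∀ y ∈ q, Φ x y = 0) (hpinv : ∀ Z ∈ h, ∀ x ∈ p, ⁅Z, x⁆ ∈ p)
    {X Y Y' : L} (hX : X ∈ p) (hY : Y ∈ q) (hY' : Y' ∈ q) :
    Φ (πm ⁅X, Y⁆) Y' = -Φ (πm ⁅X, Y'⁆) Y :=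
  (Φ.compLeft (πm ∘ₗ LieAlgebra.ad R L X)).apply_eq_neg_apply_of_apply_self_eq_zero
    (fun _ hy => hGO.apply_proj_lie_self_eq_zero hπid hpm hqm horth hpinv hX hy) hY hY'

end GOSpace

end

theorem go_space_skew_symmetry_on_orthogonal_summand_general
    (L : Type*) [LieRing L] [LieAlgebra ℝ L]
    (h : LieSubalgebra ℝ L) (m : Submodule ℝ L)
    (Φ : LinearMap.BilinForm ℝ L)
    (hΦsymm : ∀ x y : L, Φ x y = Φ y x)
    (hΦpos : ∀ x ∈ m, x ≠ 0 → 0 < Φ x x)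
    (πm : L →ₗ[ℝ] L)
    (hπid : ∀ x ∈ m, πm x = x)
    -- the GO-property (Kowalski–Vanhecke criterion)
    (hGO : ∀ X ∈ m, ∃ Z ∈ h, ∀ Y ∈ m, Φ (πm ⁅X + Z, Y⁆) X = 0)
    -- the orthogonal invariant decomposition `𝔪 = 𝔭 ⊕ 𝔮`
    (p q : Submodule ℝ L) (hpm : p ≤ m) (hqm : q ≤ m)
    (hpq : p ⊔ q = m ∧ p ⊓ q = ⊥)
    (horth : ∀ x ∈ p, ∀ y ∈ q, Φ x y = 0)
    (hpinv : ∀ Z ∈ h, ∀ x ∈ p, ⁅Z, x⁆ ∈ p)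
    -- the bilinear symmetric map `U`
    (U : L → L → L)
    (hU : ∀ X ∈ m, ∀ Y ∈ m, U X Y ∈ m ∧
      ∀ Z ∈ m, 2 * Φ (U X Y) Z = Φ (πm ⁅Z, X⁆) Y + Φ X (πm ⁅Z, Y⁆)) :
    (∀ X ∈ p, ∀ Y ∈ q, ∀ Y' ∈ q, Φ (πm ⁅X, Y⁆) Y' = - Φ (πm ⁅X, Y'⁆) Y) ∧
      (∀ X ∈ q, ∀ Y ∈ q, U X Y ∈ q) := by
  have skew : ∀ X ∈ p, ∀ Y ∈ q, ∀ Y' ∈ q, Φ (πm ⁅X, Y⁆) Y' = -Φ (πm ⁅X, Y'⁆) Y :=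
    fun X hX Y hY Y' hY' =>
      HasGOProperty.apply_proj_lie_eq_neg hGO hπid hpm hqm horth hpinv hX hY hY'
  refine ⟨skew, fun X hX Y hY => ?_⟩
  obtain ⟨hUm, hUeq⟩ := hU X (hqm hX) Y (hqm hY)
  have hUp : ∀ W ∈ p, Φ (U X Y) W = 0 := by
    intro W hW
    have h2 : 2 * Φ (U X Y) W = 0 := by
      rw [hUeq W (hpm hW), hΦsymm X, skew W hW X hX Y hY, neg_add_cancel]
    simpa using h2
  have hanis : ∀ x ∈ p, Φ x x = 0 → x = 0 := fun x hx hxx =>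
    by_contra fun hne => (hΦpos x (hpm hx) hne).ne' hxx
  exact LinearMap.BilinForm.mem_of_mem_sup_of_forall_apply_eq_zero ⟨hΦsymm⟩ hanis horth
    (hpq.1 ▸ hUm) hUp

/-- Let `𝔤 = 𝔥 ⊕ 𝔪` be a reductive decomposition of a geodesic orbit space (the
GO-property holds for the `ad 𝔥`-invariant inner product `(·,·)` on `𝔪`), and let
`𝔪 = 𝔭 ⊕ 𝔮` be a `(·,·)`-orthogonal `Ad(H)`-invariant decomposition. Then for every `X ∈ 𝔭`
the operator `Y ↦ ([X,Y]_𝔪)_𝔮` on `𝔮` is `(·,·)`-skew-symmetric, and `U(𝔮,𝔮) ⊆ 𝔮`. -/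
theorem go_space_skew_symmetry_on_orthogonal_summand
    (L : Type*) [LieRing L] [LieAlgebra ℝ L] [FiniteDimensional ℝ L]
    (h : LieSubalgebra ℝ L) (m : Submodule ℝ L)
    (hcompl : IsCompl h.toSubmodule m)
    (hadm : ∀ Z ∈ h, ∀ x ∈ m, ⁅Z, x⁆ ∈ m)
    (Φ : LinearMap.BilinForm ℝ L)
    (hΦsymm : ∀ x y : L, Φ x y = Φ y x)
    (hΦpos : ∀ x ∈ m, x ≠ 0 → 0 < Φ x x)
    (hΦinv : ∀ Z ∈ h, ∀ x ∈ m, ∀ y ∈ m, Φ ⁅Z, x⁆ y + Φ x ⁅Z, y⁆ = 0)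
    (πm : L →ₗ[ℝ] L)
    (hπmem : ∀ x : L, πm x ∈ m) (hπid : ∀ x ∈ m, πm x = x) (hπh : ∀ x ∈ h, πm x = 0)
    -- the GO-property (Kowalski–Vanhecke criterion)
    (hGO : ∀ X ∈ m, ∃ Z ∈ h, ∀ Y ∈ m, Φ (πm ⁅X + Z, Y⁆) X = 0)
    -- the orthogonal invariant decomposition `𝔪 = 𝔭 ⊕ 𝔮`
    (p q : Submodule ℝ L) (hpm : p ≤ m) (hqm : q ≤ m)
    (hpq : p ⊔ q = m ∧ p ⊓ q = ⊥)
    (horth : ∀ x ∈ p, ∀ y ∈ q, Φ x y = 0)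
    (hpinv : ∀ Z ∈ h, ∀ x ∈ p, ⁅Z, x⁆ ∈ p)
    (hqinv : ∀ Z ∈ h, ∀ y ∈ q, ⁅Z, y⁆ ∈ q)
    -- the bilinear symmetric map `U`
    (U : L → L → L)
    (hU : ∀ X ∈ m, ∀ Y ∈ m, U X Y ∈ m ∧
      ∀ Z ∈ m, 2 * Φ (U X Y) Z = Φ (πm ⁅Z, X⁆) Y + Φ X (πm ⁅Z, Y⁆)) :
    (∀ X ∈ p, ∀ Y ∈ q, ∀ Y' ∈ q, Φ (πm ⁅X, Y⁆) Y' = - Φ (πm ⁅X, Y'⁆) Y) ∧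
      (∀ X ∈ q, ∀ Y ∈ q, U X Y ∈ q) :=
  go_space_skew_symmetry_on_orthogonal_summand_general L h m Φ hΦsymm hΦpos πm hπid hGO p q hpm hqm
    hpq horth hpinv U hU
end

section
/- Let $\mathfrak{g} = \mathfrak{h} \oplus \mathfrak{m}$ be a reductive decomposition satisfying the GO-property with respect to an $\operatorname{ad}(\mathfrak{h})$-invariant inner product $(\cdot,\cdot)$ on $\mathfrak{m}$. Let $\mathfrak{p} \subseteq \mathfrak{m}$ generate a subalgebra $\mathfrak{k} = \mathfrak{h}' \oplus \mathfrak{p}$ with $\mathfrak{h}' \subseteq \mathfrak{h}$, and suppose $\mathfrak{h}' + C_{\mathfrak{h}}(\mathfrak{p}) = \mathfrak{h}$, where $C_{\mathfrak{h}}(\mathfrak{p})$ is the centralizer of $\mathfrak{p}$ in $\mathfrak{h}$. Then for every $X \in \mathfrak{p}$ there exists $Z \in \mathfrak{h}'$ such that $([X+Z, Y]_{\mathfrak{p}}, X) = 0$ for all $Y \in \mathfrak{p}$; i.e., the subalgebra $\mathfrak{k}$ inherits the GO-property. -/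
theorem lie_add_add_eq_of_lie_eq_zero {L : Type*} [LieRing L] {X Z U Y : L} (hU : ⁅U, Y⁆ = 0) :
    ⁅X + (Z + U), Y⁆ = ⁅X + Z, Y⁆ := by
  rw [← add_assoc, add_lie, hU, add_zero]

theorem go_property_inherited_by_subalgebra_general
    (L : Type*) [LieRing L] [LieAlgebra ℝ L]
    (h : LieSubalgebra ℝ L) (m : Submodule ℝ L)
    (Φ : LinearMap.BilinForm ℝ L)
    (πm : L →ₗ[ℝ] L)
    (hGO : ∀ X ∈ m, ∃ Z ∈ h, ∀ Y ∈ m, Φ (πm ⁅X + Z, Y⁆) X = 0)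
    (p : Submodule ℝ L) (hpm : p ≤ m)
    (h' : LieSubalgebra ℝ L)
    -- `𝔥' + C_𝔥(𝔭) = 𝔥`
    (hcent : ∀ W ∈ h, ∃ Z' ∈ h', ∃ U ∈ h, (∀ x ∈ p, ⁅U, x⁆ = 0) ∧ W = Z' + U) :
    ∀ X ∈ p, ∃ Z ∈ h', ∀ Y ∈ p, Φ (πm ⁅X + Z, Y⁆) X = 0 := by
  intro X hX
  obtain ⟨W, hW, hGOW⟩ := hGO X (hpm hX)
  obtain ⟨Z', hZ', U, -, hUp, rfl⟩ := hcent W hW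
  refine ⟨Z', hZ', fun Y hY => ?_⟩
  rw [← lie_add_add_eq_of_lie_eq_zero (hUp Y hY)]
  exact hGOW Y (hpm hY)

/-- Let `𝔤 = 𝔥 ⊕ 𝔪` satisfy the GO-property, let `𝔭 ⊆ 𝔪` generate a subalgebra
`𝔨 = 𝔥' ⊕ 𝔭` with `𝔥' ⊆ 𝔥`, and assume `𝔥' + C_𝔥(𝔭) = 𝔥`. Then for every `X ∈ 𝔭` there is
`Z ∈ 𝔥'` with `([X+Z,Y]_𝔭, X) = 0` for all `Y ∈ 𝔭`: the subalgebra `𝔨` inherits the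
GO-property. -/
theorem go_property_inherited_by_subalgebra
    (L : Type*) [LieRing L] [LieAlgebra ℝ L] [FiniteDimensional ℝ L]
    (h : LieSubalgebra ℝ L) (m : Submodule ℝ L)
    (hcompl : IsCompl h.toSubmodule m)
    (hadm : ∀ Z ∈ h, ∀ x ∈ m, ⁅Z, x⁆ ∈ m)
    (Φ : LinearMap.BilinForm ℝ L)
    (hΦsymm : ∀ x y : L, Φ x y = Φ y x)
    (hΦpos : ∀ x ∈ m, x ≠ 0 → 0 < Φ x x)
    (hΦinv : ∀ Z ∈ h, ∀ x ∈ m, ∀ y ∈ m, Φ ⁅Z, x⁆ y + Φ x ⁅Z, y⁆ = 0)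
    (πm : L →ₗ[ℝ] L)
    (hπmem : ∀ x : L, πm x ∈ m) (hπid : ∀ x ∈ m, πm x = x) (hπh : ∀ x ∈ h, πm x = 0)
    (hGO : ∀ X ∈ m, ∃ Z ∈ h, ∀ Y ∈ m, Φ (πm ⁅X + Z, Y⁆) X = 0)
    -- `𝔭` generates the subalgebra `𝔨 = 𝔥' ⊕ 𝔭`, `𝔥' ⊆ 𝔥`
    (p : Submodule ℝ L) (hpm : p ≤ m)
    (h' : LieSubalgebra ℝ L) (hh'h : h'.toSubmodule ≤ h.toSubmodule)
    (hk : ∀ X ∈ p, ∀ Y ∈ p, ⁅X, Y⁆ ∈ p ⊔ h'.toSubmodule)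
    (hph' : ∀ Z ∈ h', ∀ x ∈ p, ⁅Z, x⁆ ∈ p)
    -- `𝔥' + C_𝔥(𝔭) = 𝔥`
    (hcent : ∀ W ∈ h, ∃ Z' ∈ h', ∃ U ∈ h, (∀ x ∈ p, ⁅U, x⁆ = 0) ∧ W = Z' + U) :
    ∀ X ∈ p, ∃ Z ∈ h', ∀ Y ∈ p, Φ (πm ⁅X + Z, Y⁆) X = 0 :=
  go_property_inherited_by_subalgebra_general L h m Φ πm hGO p hpm h' hcent
end

section
/- Let $\mathfrak{g} = \mathfrak{h} \oplus \mathfrak{m}$ be a reductive decomposition with $B(\mathfrak{h},\mathfrak{m}) = 0$ ($B$ the Killing form) satisfying the GO-property for an $\operatorname{ad}(\mathfrak{h})$-invariant inner product $(\cdot,\cdot)$ on $\mathfrak{m}$. Then for every $Y \in C_{\mathfrak{g}}(\mathfrak{h}) \cap \mathfrak{m}$, the operator $\operatorname{ad}(Y)|_{\mathfrak{m}}$ (composed with projection to $\mathfrak{m}$) is skew-symmetric with respect to $(\cdot,\cdot)$, and $([Y,Z]_{\mathfrak{m}}, Y) = 0$ for all $Z \in \mathfrak{g}$. -/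
theorem LinearMap.BilinForm.apply_eq_neg_apply_swap_of_mem
    {R M : Type*} [CommRing R] [AddCommGroup M] [Module R M]
    (B : LinearMap.BilinForm R M) {p : Submodule R M} (hB : ∀ x ∈ p, B x x = 0)
    {x y : M} (hx : x ∈ p) (hy : y ∈ p) : B x y = -B y x := by
  have hAlt : (B.domRestrict₁₂ p p).IsAlt := fun z => hB z z.2
  exact (hAlt.neg ⟨y, hy⟩ ⟨x, hx⟩).symm

section GOProperty

variable {R L : Type*} [CommRing R] [LieRing L] [LieAlgebra R L]
  {h : LieSubalgebra R L} {m : Submodule R L} {Φ : LinearMap.BilinForm R L} {πm : L →ₗ[R] L}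

/-- Test the GO-identity of `X` against `W = Y`: the `𝔥`-component of the geodesic vector
commutes with `Y` and drops out. -/
theorem apply_projection_lie_self_eq_zero_of_go
    (hGO : ∀ X ∈ m, ∃ Z ∈ h, ∀ W ∈ m, Φ (πm ⁅X + Z, W⁆) X = 0)
    {Y : L} (hYm : Y ∈ m) (hYc : ∀ W ∈ h, ⁅Y, W⁆ = 0) {X : L} (hX : X ∈ m) :
    Φ (πm ⁅Y, X⁆) X = 0 := by
  obtain ⟨Z, hZ, hGOX⟩ := hGO X hX
  have hZY : ⁅Z, Y⁆ = 0 := by rw [← lie_skew, hYc Z hZ, neg_zero]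
  have hXY : Φ (πm ⁅X, Y⁆) X = 0 := by simpa [add_lie, hZY] using hGOX Y hYm
  rw [← lie_skew, map_neg, map_neg, LinearMap.neg_apply, hXY, neg_zero]

end GOProperty

theorem go_space_centralizer_elements_skew_general
    (L : Type*) [LieRing L] [LieAlgebra ℝ L]
    (h : LieSubalgebra ℝ L) (m : Submodule ℝ L)
    (hcompl : IsCompl h.toSubmodule m)
    (Φ : LinearMap.BilinForm ℝ L)
    (πm : L →ₗ[ℝ] L)
    (hGO : ∀ X ∈ m, ∃ Z ∈ h, ∀ W ∈ m, Φ (πm ⁅X + Z, W⁆) X = 0) :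
    ∀ Y ∈ m, (∀ W ∈ h, ⁅Y, W⁆ = 0) →
      (∀ X ∈ m, ∀ X' ∈ m, Φ (πm ⁅Y, X⁆) X' = - Φ (πm ⁅Y, X'⁆) X) ∧
        (∀ Z : L, Φ (πm ⁅Y, Z⁆) Y = 0) := by
  intro Y hYm hYc
  have hskew : ∀ X ∈ m, ∀ X' ∈ m, Φ (πm ⁅Y, X⁆) X' = - Φ (πm ⁅Y, X'⁆) X :=
    fun _ hX _ hX' =>
      LinearMap.BilinForm.apply_eq_neg_apply_swap_of_mem (Φ ∘ₗ πm ∘ₗ LieAlgebra.ad ℝ L Y)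
        (fun _ hx => apply_projection_lie_self_eq_zero_of_go hGO hYm hYc hx) hX hX'
  refine ⟨hskew, fun Z => ?_⟩
  have hZ : Z ∈ h.toSubmodule ⊔ m := hcompl.sup_eq_top ▸ Submodule.mem_top
  obtain ⟨a, ha, b, hb, rfl⟩ := Submodule.mem_sup.mp hZ
  rw [lie_add, hYc a ha, zero_add, hskew b hb Y hYm, lie_self, map_zero, map_zero,
    LinearMap.zero_apply, neg_zero]

/-- Let `𝔤 = 𝔥 ⊕ 𝔪` be a reductive decomposition with `B(𝔥,𝔪) = 0` satisfying the
GO-property. Then for every `Y ∈ C_𝔤(𝔥) ∩ 𝔪` the operator `X ↦ [Y,X]_𝔪` on `𝔪` is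
skew-symmetric for `(·,·)`, and `([Y,Z]_𝔪, Y) = 0` for all `Z ∈ 𝔤`. -/
theorem go_space_centralizer_elements_skew
    (L : Type*) [LieRing L] [LieAlgebra ℝ L] [FiniteDimensional ℝ L]
    (h : LieSubalgebra ℝ L) (m : Submodule ℝ L)
    (hcompl : IsCompl h.toSubmodule m)
    (hadm : ∀ Z ∈ h, ∀ x ∈ m, ⁅Z, x⁆ ∈ m)
    (horthB : ∀ X ∈ h, ∀ y ∈ m, killingForm ℝ L X y = 0)
    (Φ : LinearMap.BilinForm ℝ L)
    (hΦsymm : ∀ x y : L, Φ x y = Φ y x)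
    (hΦpos : ∀ x ∈ m, x ≠ 0 → 0 < Φ x x)
    (hΦinv : ∀ Z ∈ h, ∀ x ∈ m, ∀ y ∈ m, Φ ⁅Z, x⁆ y + Φ x ⁅Z, y⁆ = 0)
    (πm : L →ₗ[ℝ] L)
    (hπmem : ∀ x : L, πm x ∈ m) (hπid : ∀ x ∈ m, πm x = x) (hπh : ∀ x ∈ h, πm x = 0)
    (hGO : ∀ X ∈ m, ∃ Z ∈ h, ∀ W ∈ m, Φ (πm ⁅X + Z, W⁆) X = 0) :
    ∀ Y ∈ m, (∀ W ∈ h, ⁅Y, W⁆ = 0) →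
      (∀ X ∈ m, ∀ X' ∈ m, Φ (πm ⁅Y, X⁆) X' = - Φ (πm ⁅Y, X'⁆) X) ∧
        (∀ Z : L, Φ (πm ⁅Y, Z⁆) Y = 0) :=
  go_space_centralizer_elements_skew_general L h m hcompl Φ πm hGO
end

section
/- Let $\mathfrak{g} = \mathfrak{h} \oplus \mathfrak{m}$ be a reductive decomposition with $B(\mathfrak{h},\mathfrak{m}) = 0$ satisfying the GO-property. If $Y \in C_{\mathfrak{g}}(\mathfrak{h}) \cap \mathfrak{n}(\mathfrak{g})$, where $\mathfrak{n}(\mathfrak{g})$ is the nilradical, then $Y$ lies in the center of $\mathfrak{g}$. Consequently $C_{\mathfrak{g}}(\mathfrak{h}) \cap \mathfrak{n}(\mathfrak{g})$ equals the center of $\mathfrak{g}$. -/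
open LieAlgebra LieModule

lemma killingForm_eq_zero_of_mem_nilpotent_ideal
    {L : Type*} [LieRing L] [LieAlgebra ℝ L] [FiniteDimensional ℝ L]
    (I : LieIdeal ℝ L) (hI : LieRing.IsNilpotent I)
    {y : L} (hy : y ∈ I) (x : L) : killingForm ℝ L y x = 0 := by
  obtain ⟨k, hk⟩ := (LieModule.isNilpotent_iff ℝ I I).mp hI
  set f : L →ₗ[ℝ] L := LieAlgebra.ad ℝ L y ∘ₗ LieAlgebra.ad ℝ L x with hfdef
  have hstep : ∀ (j : ℕ) (z : L), z ∈ I.lcs L j → f z ∈ I.lcs L (j + 1) := by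
    intro j z hz
    have h1 : ⁅x, z⁆ ∈ I.lcs L j := (I.lcs L j).lie_mem hz
    have h2 : ⁅y, ⁅x, z⁆⁆ ∈ ⁅I, I.lcs L j⁆ := LieSubmodule.lie_mem_lie hy h1
    rwa [LieIdeal.lcs_succ]
  have hiter : ∀ (j : ℕ) (z : L), (f ^ j) z ∈ I.lcs L j := by
    intro j
    induction j with
    | zero => intro z; simp [LieIdeal.lcs_zero]
    | succ j ih =>
      intro z
      rw [pow_succ', Module.End.mul_apply]
      exact hstep j _ (ih z)
  have key : ∀ j : ℕ, LieSubmodule.toSubmodule (I.lcs L (j + 1)) ≤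
      (LieSubmodule.toSubmodule (lowerCentralSeries ℝ I I j)).map
        ((LieSubmodule.toSubmodule I).subtype) := by
    intro j
    induction j with
    | zero =>
      intro z hz
      have : z ∈ I := by
        have := LieSubmodule.lie_le_left I (⊤ : LieSubmodule ℝ L L)
        rw [LieIdeal.lcs_succ, LieIdeal.lcs_zero] at hz
        exact this hz
      exact ⟨⟨z, this⟩, by simp, rfl⟩
    | succ j ih =>
      rw [LieIdeal.lcs_succ]
      rw [LieSubmodule.lieIdeal_oper_eq_linear_span']
      rw [Submodule.span_le]
      rintro - ⟨a, ha, w, hw, rfl⟩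
      obtain ⟨⟨w', hw'I⟩, hw'mem, rfl⟩ := ih hw
      refine ⟨⁅(⟨a, ha⟩ : I), (⟨w', hw'I⟩ : I)⁆, ?_, rfl⟩
      rw [lowerCentralSeries_succ]
      exact LieSubmodule.lie_mem_lie (LieSubmodule.mem_top _) hw'mem
  have hfnil : IsNilpotent f := by
    refine ⟨k + 1, ?_⟩
    ext z
    have h1 := hiter (k + 1) z
    have h2 := key k h1
    rw [hk] at h2
    simpa using h2
  have := LinearMap.isNilpotent_trace_of_isNilpotent hfnil
  rw [killingForm_apply_apply]
  exact isNilpotent_iff_eq_zero.mp this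



/-- The nilradical of a Lie algebra: the largest nilpotent ideal, realized as the `sSup` of all
nilpotent ideals. -/
def lieNilradical (R : Type*) (L : Type*) [CommRing R] [LieRing L] [LieAlgebra R L] :
    LieIdeal R L :=
  sSup { I : LieIdeal R L | LieRing.IsNilpotent I }

/-- Let `𝔤 = 𝔥 ⊕ 𝔪` with `𝔪 = {X : B(X,𝔥)=0}` satisfy the GO-property. Then every
`Y ∈ C_𝔤(𝔥) ∩ 𝔫(𝔤)` is central in `𝔤`; consequently `C_𝔤(𝔥) ∩ 𝔫(𝔤)` equals the center. -/
theorem go_space_centralizer_cap_nilradical_eq_center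
    (L : Type*) [LieRing L] [LieAlgebra ℝ L] [FiniteDimensional ℝ L]
    (h : LieSubalgebra ℝ L) (m : Submodule ℝ L)
    (hcompl : IsCompl h.toSubmodule m)
    (hmchar : ∀ x : L, x ∈ m ↔ ∀ W ∈ h, killingForm ℝ L x W = 0)
    (hadm : ∀ Z ∈ h, ∀ x ∈ m, ⁅Z, x⁆ ∈ m)
    (Φ : LinearMap.BilinForm ℝ L)
    (hΦsymm : ∀ x y : L, Φ x y = Φ y x)
    (hΦpos : ∀ x ∈ m, x ≠ 0 → 0 < Φ x x)
    (hΦinv : ∀ Z ∈ h, ∀ x ∈ m, ∀ y ∈ m, Φ ⁅Z, x⁆ y + Φ x ⁅Z, y⁆ = 0)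
    (πm : L →ₗ[ℝ] L)
    (hπmem : ∀ x : L, πm x ∈ m) (hπid : ∀ x ∈ m, πm x = x) (hπh : ∀ x ∈ h, πm x = 0)
    (hGO : ∀ X ∈ m, ∃ Z ∈ h, ∀ W ∈ m, Φ (πm ⁅X + Z, W⁆) X = 0) :
    ∀ Y : L, (Y ∈ lieNilradical ℝ L ∧ ∀ W ∈ h, ⁅Y, W⁆ = 0) ↔ Y ∈ LieAlgebra.center ℝ L := by
  intro Y
  constructor
  · rintro ⟨hYn, hYc⟩
    -- Step 0 : the Killing form vanishes on (Y, ⬝)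
    have hYkill : ∀ x : L, killingForm ℝ L Y x = 0 := by
      have hle : lieNilradical ℝ L ≤ LieIdeal.killingCompl ℝ L ⊤ := by
        apply sSup_le
        rintro I (hI : LieRing.IsNilpotent I)
        intro z hz
        rw [LieIdeal.mem_killingCompl]
        intro w _
        rw [LieModule.traceForm_comm]
        exact killingForm_eq_zero_of_mem_nilpotent_ideal I hI hz w
      have := hle hYn
      rw [LieIdeal.mem_killingCompl] at this
      intro x
      rw [LieModule.traceForm_comm]
      exact this x (LieSubmodule.mem_top x)
    -- Step A : the image of ad Y lies in m
    have hA : ∀ x : L, ⁅Y, x⁆ ∈ m := by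
      intro x
      rw [hmchar]
      intro W hW
      have h1 : killingForm ℝ L ⁅x, Y⁆ W = killingForm ℝ L x ⁅Y, W⁆ :=
        LieModule.traceForm_apply_lie_apply ℝ L L x Y W
      rw [hYc W hW] at h1
      have h2 : ⁅Y, x⁆ = -⁅x, Y⁆ := (lie_skew Y x).symm
      rw [h2, map_neg, LinearMap.neg_apply, h1]
      simp
    -- Step B : decompose Y
    have hYtop : Y ∈ h.toSubmodule ⊔ m := by rw [hcompl.sup_eq_top]; trivial
    obtain ⟨Yh, hYh, Ym, hYm, hYsum⟩ := Submodule.mem_sup.mp hYtop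
    have hYhh : Yh ∈ h := hYh
    -- Step C : quadratic identity
    have hq : ∀ X ∈ m, Φ ⁅Y, X⁆ X = 0 := by
      intro X hX
      have hYhX : Φ ⁅Yh, X⁆ X = 0 := by
        have := hΦinv Yh hYhh X hX X hX
        rw [hΦsymm X ⁅Yh, X⁆] at this
        linarith
      have hYmX : Φ ⁅Ym, X⁆ X = 0 := by
        obtain ⟨Z, hZ, hZgo⟩ := hGO X hX
        have hZY : ⁅Z, Y⁆ = 0 := by
          rw [← neg_eq_zero, lie_skew]; exact hYc Z hZ
        have hZYm : ⁅Z, Ym⁆ = 0 := by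
          have e1 : ⁅Z, Ym⁆ = ⁅Z, Y⁆ - ⁅Z, Yh⁆ := by
            rw [← hYsum]; simp [lie_add]
          have e2 : ⁅Z, Ym⁆ ∈ m := hadm Z hZ Ym hYm
          have e3 : ⁅Z, Ym⁆ ∈ h.toSubmodule := by
            rw [e1, hZY, zero_sub]
            exact neg_mem (h.lie_mem hZ hYhh)
          have : ⁅Z, Ym⁆ ∈ (⊥ : Submodule ℝ L) := hcompl.disjoint.le_bot ⟨e3, e2⟩
          simpa using this
        have hXYm : ⁅X, Ym⁆ ∈ m := by
          have eYX : ⁅Y, X⁆ = ⁅Yh, X⁆ + ⁅Ym, X⁆ := by rw [← hYsum, add_lie]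
          have e1 : ⁅X, Ym⁆ = -⁅Y, X⁆ + ⁅Yh, X⁆ := by
            rw [← lie_skew X Ym, eYX]; abel
          rw [e1]
          exact add_mem (neg_mem (hA X)) (hadm Yh hYhh X hX)
        have := hZgo Ym hYm
        rw [add_lie, hZYm, add_zero, hπid _ hXYm] at this
        have h4 : ⁅Ym, X⁆ = -⁅X, Ym⁆ := (lie_skew Ym X).symm
        rw [h4, map_neg, LinearMap.neg_apply, this, neg_zero]
      have : ⁅Y, X⁆ = ⁅Yh, X⁆ + ⁅Ym, X⁆ := by rw [← hYsum, add_lie]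
      rw [this, map_add, LinearMap.add_apply, hYhX, hYmX, add_zero]
    -- polarization
    have hskew : ∀ a ∈ m, ∀ b ∈ m, Φ ⁅Y, a⁆ b + Φ ⁅Y, b⁆ a = 0 := by
      intro a ha b hb
      have h1 := hq (a + b) (add_mem ha hb)
      have h2 := hq a ha
      have h3 := hq b hb
      rw [lie_add] at h1
      simp only [map_add, LinearMap.add_apply] at h1
      linarith
    -- Step D : inner product space structure on m
    let core : InnerProductSpace.Core ℝ ↥m :=
      { inner := fun a b => Φ a b
        conj_inner_symm := fun a b => by simpa using hΦsymm (b : L) (a : L)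
        re_inner_nonneg := fun a => by
          rcases eq_or_ne (a : L) 0 with h0 | h0
          · simp [h0]
          · exact le_of_lt (by simpa using hΦpos a a.2 h0)
        definite := fun a ha => by
          by_contra hne
          have : (a : L) ≠ 0 := fun hc => hne (Subtype.ext hc)
          exact absurd ha (ne_of_gt (by simpa using hΦpos a a.2 this))
        add_left := fun a b c => by simp
        smul_left := fun a b r => by simp }
    letI : NormedAddCommGroup ↥m := core.toNormedAddCommGroup
    letI : InnerProductSpace ℝ ↥m := InnerProductSpace.ofCore core.toCore
    have hinner : ∀ a b : ↥m, (inner ℝ a b : ℝ) = Φ a b := fun _ _ => rfl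
    -- the restricted operator
    have hTmem : ∀ x ∈ m, ⁅Y, x⁆ ∈ m := fun x _ => hA x
    let T : ↥m →ₗ[ℝ] ↥m := (LieAlgebra.ad ℝ L Y).restrict hTmem
    have hTapp : ∀ a : ↥m, ((T a : L)) = ⁅Y, (a : L)⁆ := fun a => rfl
    -- trace identity
    have htr : LinearMap.trace ℝ ↥m (T ∘ₗ T) = 0 := by
      have hg : ∀ x : L, (LieAlgebra.ad ℝ L Y ∘ₗ LieAlgebra.ad ℝ L Y) x ∈ m :=
        fun x => hA _
      have hg' : ∀ x ∈ m, (LieAlgebra.ad ℝ L Y ∘ₗ LieAlgebra.ad ℝ L Y) x ∈ m :=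
        fun x _ => hg x
      have e1 := LinearMap.trace_restrict_eq_of_forall_mem m
        (LieAlgebra.ad ℝ L Y ∘ₗ LieAlgebra.ad ℝ L Y) hg hg'
      have e2 : (LieAlgebra.ad ℝ L Y ∘ₗ LieAlgebra.ad ℝ L Y).restrict hg' = T ∘ₗ T := by
        ext a
        rfl
      rw [e2] at e1
      rw [e1, ← killingForm_apply_apply, hYkill Y]
    -- compute the trace with an orthonormal basis
    let b := stdOrthonormalBasis ℝ ↥m
    have htr2 : LinearMap.trace ℝ ↥m (T ∘ₗ T) =
        ∑ i, (inner ℝ (b i) ((T ∘ₗ T) (b i)) : ℝ) := by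
      rw [LinearMap.trace_eq_matrix_trace ℝ b.toBasis]
      rw [Matrix.trace]
      congr 1
      ext i
      rw [Matrix.diag_apply, LinearMap.toMatrix_apply, b.coe_toBasis,
        b.coe_toBasis_repr_apply, b.repr_apply_apply]
    have hterm : ∀ i, (inner ℝ (b i) ((T ∘ₗ T) (b i)) : ℝ) = -Φ (T (b i)) (T (b i)) := by
      intro i
      have hs := hskew ((T (b i) : L)) (T (b i)).2 ((b i : L)) (b i).2
      rw [← hTapp (b i)] at hs
      rw [hinner]
      have e1 : ((T ∘ₗ T) (b i) : L) = ⁅Y, (T (b i) : L)⁆ := rfl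
      rw [e1, hΦsymm]
      linarith
    have hsum : ∑ i, Φ (T (b i)) (T (b i)) = 0 := by
      have h1 := htr2.symm.trans htr
      rw [Finset.sum_congr rfl (fun i _ => hterm i)] at h1
      have h2 : -∑ i, Φ (T (b i)) (T (b i)) = 0 := by
        rw [← h1, Finset.sum_neg_distrib]
      linarith
    have hTb : ∀ i, T (b i) = 0 := by
      intro i
      have hterm_nonneg : ∀ j, (0:ℝ) ≤ Φ (T (b j)) (T (b j)) := by
        intro j
        rcases eq_or_ne ((T (b j) : L)) 0 with h0 | h0
        · simp [h0]
        · exact le_of_lt (hΦpos _ (T (b j)).2 h0)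
      have := (Finset.sum_eq_zero_iff_of_nonneg (fun j _ => hterm_nonneg j)).mp hsum
        i (Finset.mem_univ i)
      by_contra hne
      have h0 : ((T (b i) : L)) ≠ 0 := fun hc => hne (Subtype.ext hc)
      exact absurd this (ne_of_gt (hΦpos _ (T (b i)).2 h0))
    have hT0 : T = 0 := b.toBasis.ext fun i => by rw [b.coe_toBasis]; simp [hTb i]
    have hm0 : ∀ x ∈ m, ⁅Y, x⁆ = 0 := by
      intro x hx
      have : T ⟨x, hx⟩ = 0 := by rw [hT0]; rfl
      have := congrArg (Subtype.val) this
      rwa [hTapp] at this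
    -- conclude
    rw [LieModule.mem_maxTrivSubmodule]
    intro x
    have hxtop : x ∈ h.toSubmodule ⊔ m := by rw [hcompl.sup_eq_top]; trivial
    obtain ⟨xh, hxh, xm, hxm, rfl⟩ := Submodule.mem_sup.mp hxtop
    have : ⁅Y, xh + xm⁆ = 0 := by
      rw [lie_add, hYc xh hxh, hm0 xm hxm, add_zero]
    rw [← neg_eq_zero, lie_skew]
    exact this
  · intro hY
    rw [LieModule.mem_maxTrivSubmodule] at hY
    constructor
    · have hcen : LieAlgebra.center ℝ L ∈
          { I : LieIdeal ℝ L | LieRing.IsNilpotent I } := by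
        show LieRing.IsNilpotent (LieAlgebra.center ℝ L)
        infer_instance
      exact le_sSup hcen (by rwa [LieModule.mem_maxTrivSubmodule])
    · intro W _
      rw [← neg_eq_zero, lie_skew]
      exact hY W
end

section
/- Let $(G/H,\rho)$ be a geodesic orbit Riemannian space with reductive decomposition $\mathfrak{g} = \mathfrak{h}\oplus\mathfrak{m}$ and invariant inner product $(\cdot,\cdot)$ on $\mathfrak{m}$, with nilradical $\mathfrak{n} = \mathfrak{n}(\mathfrak{g}) \subseteq \mathfrak{m}$. Suppose $[\mathfrak{n},\mathfrak{n}] \neq 0$ and let $\mathfrak{a}$ be the $(\cdot,\cdot)$-orthogonal complement of $[\mathfrak{n},\mathfrak{n}]$ in $\mathfrak{n}$. Then for every $X \in \mathfrak{a}$ and $Y \in [\mathfrak{n},\mathfrak{n}]$, $[X,Y] = 0$; consequently $\mathfrak{n}$ is at most two-step nilpotent, i.e., $[\mathfrak{n},[\mathfrak{n},\mathfrak{n}]] = 0$. -/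
namespace GOAux
variable {R L : Type*} [CommRing R] [LieRing L] [LieAlgebra R L]

def brk (I : LieIdeal R L) : ℕ → LieIdeal R L := fun n => (fun N => ⁅I, N⁆)^[n] I

lemma brk_zero (I : LieIdeal R L) : brk I 0 = I := rfl
lemma brk_succ (I : LieIdeal R L) (n : ℕ) : brk I (n+1) = ⁅I, brk I n⁆ :=
  Function.iterate_succ_apply' _ _ _

lemma map_incl_lcs (I : LieIdeal R L) (n : ℕ) :
    LieSubmodule.map (LieSubmodule.incl I) (I.lcs (↥I) n) = brk I n := by
  induction n with
  | zero => simp [brk_zero]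
  | succ n ih => rw [LieIdeal.lcs_succ, LieSubmodule.map_bracket_eq, ih, brk_succ]

lemma isNilpotent_iff_brk (I : LieIdeal R L) :
    LieRing.IsNilpotent I ↔ ∃ n, brk I n = ⊥ := by
  have key : ∀ n, (LieModule.lowerCentralSeries R (↥I) (↥I) n = ⊥) ↔ brk I n = ⊥ := by
    intro n
    rw [← map_incl_lcs]
    constructor
    · intro hn
      have : I.lcs (↥I) n = ⊥ := by
        rw [← LieSubmodule.toSubmodule_inj, LieIdeal.coe_lcs_eq, hn]
        simp
      rw [this, LieSubmodule.map_bot]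
    · intro hn
      have : I.lcs (↥I) n = ⊥ := by
        rw [eq_bot_iff]
        intro x hx
        have hx' : (LieSubmodule.incl I) x ∈
            LieSubmodule.map (LieSubmodule.incl I) (I.lcs (↥I) n) :=
          LieSubmodule.mem_map_of_mem hx
        rw [hn, LieSubmodule.mem_bot] at hx'
        rw [LieSubmodule.mem_bot]
        exact LieSubmodule.injective_incl I (by simpa using hx')
      rw [← LieSubmodule.toSubmodule_inj, ← LieIdeal.coe_lcs_eq, this]
      simp
  rw [LieRing.IsNilpotent, LieModule.isNilpotent_iff R]
  constructor
  · rintro ⟨n, hn⟩; exact ⟨n, (key n).mp hn⟩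
  · rintro ⟨n, hn⟩; exact ⟨n, (key n).mpr hn⟩


lemma brk_le_lcsL (I : LieIdeal R L) (n : ℕ) : brk I n ≤ I.lcs L n := by
  induction n with
  | zero => exact le_top
  | succ n ih =>
    rw [brk_succ, LieIdeal.lcs_succ]
    exact LieSubmodule.mono_lie_right _ ih

lemma lcsL_succ_le_brk (I : LieIdeal R L) (n : ℕ) : I.lcs L (n+1) ≤ brk I n := by
  induction n with
  | zero =>
    rw [LieIdeal.lcs_succ, LieIdeal.lcs_zero, brk_zero]
    exact LieSubmodule.lie_le_left I ⊤
  | succ n ih =>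
    rw [LieIdeal.lcs_succ, brk_succ]
    exact LieSubmodule.mono_lie_right _ ih

lemma lcsL_succ_le (I : LieIdeal R L) (n : ℕ) : I.lcs L (n+1) ≤ I.lcs L n := by
  rw [LieIdeal.lcs_succ]
  exact LieSubmodule.lie_le_right _ _

lemma lcsL_antitone (I : LieIdeal R L) : Antitone (I.lcs L) :=
  antitone_nat_of_succ_le (lcsL_succ_le I)

lemma exists_lcsL_eq_bot (I : LieIdeal R L) (h : LieRing.IsNilpotent I) :
    ∃ n, I.lcs L n = ⊥ := by
  obtain ⟨n, hn⟩ := (isNilpotent_iff_brk I).mp h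
  exact ⟨n + 1, le_bot_iff.mp (hn ▸ lcsL_succ_le_brk I n)⟩

lemma isNilpotent_of_lcsL (I : LieIdeal R L) (h : ∃ n, I.lcs L n = ⊥) :
    LieRing.IsNilpotent I := by
  obtain ⟨n, hn⟩ := h
  exact (isNilpotent_iff_brk I).mpr ⟨n, le_bot_iff.mp (hn ▸ brk_le_lcsL I n)⟩

lemma lie_finset_sup (I : LieIdeal R L) {α : Type*} (s : Finset α) (f : α → LieIdeal R L) :
    ⁅I, s.sup f⁆ ≤ s.sup fun a => ⁅I, f a⁆ := by
  classical
  induction s using Finset.induction_on with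
  | empty => simp [LieSubmodule.lie_bot]
  | insert _ _ _ ih =>
    rw [Finset.sup_insert, Finset.sup_insert, LieSubmodule.lie_sup]
    exact sup_le_sup le_rfl ih

lemma isNilpotent_sup (I J : LieIdeal R L) (hI : LieRing.IsNilpotent I)
    (hJ : LieRing.IsNilpotent J) : LieRing.IsNilpotent ↥(I ⊔ J) := by
  classical
  obtain ⟨p, hp⟩ := exists_lcsL_eq_bot I hI
  obtain ⟨q, hq⟩ := exists_lcsL_eq_bot J hJ
  apply isNilpotent_of_lcsL
  refine ⟨p + q, le_bot_iff.mp ?_⟩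
  set D : ℕ → LieIdeal R L :=
    fun n => (Finset.range (n+1)).sup fun i => I.lcs L i ⊓ J.lcs L (n - i) with hD
  have key : ∀ n, (I ⊔ J).lcs L n ≤ D n := by
    intro n
    induction n with
    | zero =>
      rw [LieIdeal.lcs_zero, hD]
      refine le_trans ?_ (Finset.le_sup (Finset.mem_range.mpr (Nat.lt_succ_self 0)))
      simp
    | succ n ih =>
      rw [LieIdeal.lcs_succ]
      refine le_trans (LieSubmodule.mono_lie_right _ ih) ?_
      rw [LieSubmodule.sup_lie]
      have hIpart : ⁅I, D n⁆ ≤ D (n+1) := by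
        refine le_trans (lie_finset_sup I _ _) ?_
        apply Finset.sup_le
        intro i hi
        rw [Finset.mem_range, Nat.lt_succ_iff] at hi
        have h1 : ⁅I, I.lcs L i ⊓ J.lcs L (n - i)⁆ ≤ I.lcs L (i+1) ⊓ J.lcs L (n - i) := by
          refine le_inf ?_ ?_
          · rw [LieIdeal.lcs_succ]
            exact LieSubmodule.mono_lie_right _ inf_le_left
          · exact le_trans (LieSubmodule.mono_lie_right _ inf_le_right)
              (LieSubmodule.lie_le_right _ _)
        refine le_trans h1 ?_
        have : (i+1) ∈ Finset.range (n+1+1) := Finset.mem_range.mpr (by omega)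
        refine le_trans ?_ (Finset.le_sup this)
        have : n + 1 - (i + 1) = n - i := by omega
        rw [this]
      have hJpart : ⁅J, D n⁆ ≤ D (n+1) := by
        refine le_trans (lie_finset_sup J _ _) ?_
        apply Finset.sup_le
        intro i hi
        rw [Finset.mem_range, Nat.lt_succ_iff] at hi
        have h1 : ⁅J, I.lcs L i ⊓ J.lcs L (n - i)⁆ ≤ I.lcs L i ⊓ J.lcs L (n - i + 1) := by
          refine le_inf ?_ ?_
          · exact le_trans (LieSubmodule.mono_lie_right _ inf_le_left)
              (LieSubmodule.lie_le_right _ _)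
          · rw [LieIdeal.lcs_succ]
            exact LieSubmodule.mono_lie_right _ inf_le_right
        refine le_trans h1 ?_
        have hmem : i ∈ Finset.range (n+1+1) := Finset.mem_range.mpr (by omega)
        refine le_trans ?_ (Finset.le_sup hmem)
        have : n + 1 - i = n - i + 1 := by omega
        rw [this]
      exact sup_le hIpart hJpart
  refine le_trans (key (p+q)) ?_
  apply Finset.sup_le
  intro i hi
  rw [Finset.mem_range, Nat.lt_succ_iff] at hi
  rcases le_or_gt p i with hpi | hpi
  · exact le_trans inf_le_left (le_trans (lcsL_antitone I hpi) hp.le)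
  · have hqle : q ≤ p + q - i := by omega
    exact le_trans inf_le_right (le_trans (lcsL_antitone J hqle) hq.le)


lemma isNilpotent_bot : LieRing.IsNilpotent ↥(⊥ : LieIdeal R L) := by
  rw [LieRing.IsNilpotent, LieModule.isNilpotent_iff R]
  refine ⟨1, ?_⟩
  rw [eq_bot_iff]
  intro x _
  rw [LieSubmodule.mem_bot]
  ext
  have h2 := x.2
  rw [LieSubmodule.mem_bot] at h2
  exact h2

lemma lieNilradical_isNilpotent [IsNoetherian R L] :
    LieRing.IsNilpotent ↥(lieNilradical R L) := by
  have hwf : CompleteLattice.IsSupClosedCompact (LieSubmodule R L L) := by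
    rw [CompleteLattice.isSupClosedCompact_iff_wellFoundedGT]
    exact LieSubmodule.wellFoundedGT_of_noetherian R L L
  exact hwf {I : LieIdeal R L | LieRing.IsNilpotent I} ⟨⊥, isNilpotent_bot⟩
    (fun I hI J hJ => isNilpotent_sup I J hI hJ)

end GOAux

/-- Let `(G/H,ρ)` be a geodesic orbit space with reductive decomposition
`𝔤 = 𝔥 ⊕ 𝔪`, nilradical `𝔫 ⊆ 𝔪` and `[𝔫,𝔫] ≠ 0`, and let `𝔞` be the `(·,·)`-orthogonal
complement of `[𝔫,𝔫]` in `𝔫`. Then `[X,Y] = 0` for `X ∈ 𝔞`, `Y ∈ [𝔫,𝔫]`; consequently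
`[𝔫,[𝔫,𝔫]] = 0`, i.e. `𝔫` is at most two-step nilpotent. -/
theorem go_space_nilradical_two_step
    (L : Type*) [LieRing L] [LieAlgebra ℝ L] [FiniteDimensional ℝ L]
    (h : LieSubalgebra ℝ L) (m : Submodule ℝ L)
    (hcompl : IsCompl h.toSubmodule m)
    (hadm : ∀ Z ∈ h, ∀ x ∈ m, ⁅Z, x⁆ ∈ m)
    (Φ : LinearMap.BilinForm ℝ L)
    (hΦsymm : ∀ x y : L, Φ x y = Φ y x)
    (hΦpos : ∀ x ∈ m, x ≠ 0 → 0 < Φ x x)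
    (hΦinv : ∀ Z ∈ h, ∀ x ∈ m, ∀ y ∈ m, Φ ⁅Z, x⁆ y + Φ x ⁅Z, y⁆ = 0)
    (πm : L →ₗ[ℝ] L)
    (hπmem : ∀ x : L, πm x ∈ m) (hπid : ∀ x ∈ m, πm x = x) (hπh : ∀ x ∈ h, πm x = 0)
    (hGO : ∀ X ∈ m, ∃ Z ∈ h, ∀ W ∈ m, Φ (πm ⁅X + Z, W⁆) X = 0)
    (hnm : (lieNilradical ℝ L).toSubmodule ≤ m)
    (hnn : (⁅lieNilradical ℝ L, lieNilradical ℝ L⁆ : LieIdeal ℝ L) ≠ ⊥) :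
    (∀ X ∈ lieNilradical ℝ L,
        (∀ W ∈ (⁅lieNilradical ℝ L, lieNilradical ℝ L⁆ : LieIdeal ℝ L), Φ X W = 0) →
        ∀ Y ∈ (⁅lieNilradical ℝ L, lieNilradical ℝ L⁆ : LieIdeal ℝ L), ⁅X, Y⁆ = 0) ∧
      (∀ X ∈ lieNilradical ℝ L,
        ∀ Y ∈ (⁅lieNilradical ℝ L, lieNilradical ℝ L⁆ : LieIdeal ℝ L), ⁅X, Y⁆ = 0) := by
    classical
  set N := lieNilradical ℝ L with hNdef
  set c : LieIdeal ℝ L := ⁅N, N⁆ with hcdef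
  have hcN : c ≤ N := LieSubmodule.lie_le_right _ _
  have hNmem : ∀ x ∈ N, x ∈ m := fun x hx => hnm hx
  have hcm : ∀ x ∈ c, x ∈ m := fun x hx => hnm (hcN hx)
  have hNnil : LieRing.IsNilpotent ↥N := GOAux.lieNilradical_isNilpotent
  obtain ⟨k, hk⟩ := GOAux.exists_lcsL_eq_bot N hNnil
  have hzero : ∀ x ∈ m, Φ x x = 0 → x = 0 := by
    intro x hx hxx
    by_contra hx0
    exact absurd hxx (ne_of_gt (hΦpos x hx hx0))
  -- PART 1
  have key : ∀ X ∈ N, (∀ W ∈ c, Φ X W = 0) → ∀ Y ∈ c, ⁅X, Y⁆ = 0 := by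
    intro X hX hXperp
    have hXm : X ∈ m := hNmem X hX
    have hq : ∀ Y ∈ c, Φ ⁅Y, X⁆ Y = 0 := by
      intro Y hY
      have hYm : Y ∈ m := hcm Y hY
      obtain ⟨Z, hZ, hZeq⟩ := hGO Y hYm
      have e := hZeq X hXm
      have h1 : ⁅Y + Z, X⁆ = ⁅Y, X⁆ + ⁅Z, X⁆ := add_lie _ _ _
      have hYXc : ⁅Y, X⁆ ∈ c := by
        have h2 : ⁅X, Y⁆ ∈ c := c.lie_mem hY
        rw [← lie_skew]
        exact neg_mem h2
      have hZXm : ⁅Z, X⁆ ∈ m := hadm Z hZ X hXm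
      rw [h1, map_add, hπid _ (hcm _ hYXc), hπid _ hZXm] at e
      simp only [map_add, LinearMap.add_apply] at e
      have hinv := hΦinv Z hZ X hXm Y hYm
      have hZYc : ⁅Z, Y⁆ ∈ c := c.lie_mem hY
      have hXZ : Φ X ⁅Z, Y⁆ = 0 := hXperp _ hZYc
      linarith
    have hskew : ∀ Y ∈ c, ∀ T ∈ c, Φ ⁅Y, X⁆ T = - Φ ⁅T, X⁆ Y := by
      intro Y hY T hT
      have hq2 := hq (Y + T) (add_mem hY hT)
      rw [add_lie] at hq2
      simp only [map_add, LinearMap.add_apply] at hq2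
      have h1 := hq Y hY
      have h2 := hq T hT
      linarith
    intro Y hY
    set f := LieAlgebra.ad ℝ L X with hf
    have hyc : ∀ j, (f ^ j) Y ∈ c := by
      intro j
      induction j with
      | zero => simpa using hY
      | succ j ih =>
        rw [pow_succ', Module.End.mul_apply]
        exact c.lie_mem ih
    have hylcs : ∀ j, (f ^ j) Y ∈ N.lcs L j := by
      intro j
      induction j with
      | zero => simp [LieIdeal.lcs_zero]
      | succ j ih =>
        rw [pow_succ', Module.End.mul_apply, LieIdeal.lcs_succ]
        exact LieSubmodule.lie_mem_lie hX ih
    have hk' : N.lcs L (k+1) = ⊥ := le_bot_iff.mp (hk ▸ GOAux.lcsL_succ_le N k)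
    have down : ∀ d j, 1 ≤ j → j + d = k + 1 → (f ^ j) Y = 0 := by
      intro d
      induction d with
      | zero =>
        intro j h1 hj
        have hj' : j = k + 1 := by omega
        subst hj'
        have hmem := hylcs (k+1)
        rw [hk', LieSubmodule.mem_bot] at hmem
        exact hmem
      | succ d ih =>
        intro j h1 hj
        have hnext : (f ^ (j+1)) Y = 0 := ih (j+1) (by omega) (by omega)
        obtain ⟨i, rfl⟩ : ∃ i, j = i + 1 := ⟨j - 1, by omega⟩
        have e1 : (f ^ (i+1)) Y = ⁅X, (f ^ i) Y⁆ := by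
          rw [pow_succ', Module.End.mul_apply]; rfl
        have e15 : (f ^ (i+1+1)) Y = ⁅X, (f ^ (i+1)) Y⁆ := by
          rw [pow_succ', Module.End.mul_apply]; rfl
        have e2 : ⁅(f ^ i) Y, X⁆ = -((f ^ (i+1)) Y) := by
          rw [e1, ← lie_skew]
        have e3 : ⁅(f ^ (i+1)) Y, X⁆ = 0 := by
          rw [← lie_skew, ← e15, hnext, neg_zero]
        have hs := hskew ((f ^ i) Y) (hyc i) ((f ^ (i+1)) Y) (hyc (i+1))
        rw [e2, e3] at hs
        simp only [map_neg, LinearMap.neg_apply, map_zero, LinearMap.zero_apply, neg_zero] at hs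
        have hΦvv : Φ ((f ^ (i+1)) Y) ((f ^ (i+1)) Y) = 0 := by linarith
        exact hzero _ (hcm _ (hyc (i+1))) hΦvv
    have h1 := down k 1 le_rfl (by omega)
    rw [pow_one] at h1
    exact h1
  -- PART 2
  have hrefl : Φ.IsRefl := fun x y hxy => by rw [hΦsymm]; exact hxy
  set W := c.toSubmodule with hWdef
  have hWm : W ≤ m := fun x hx => hcm x hx
  have hnd : (Φ.restrict W).Nondegenerate := by
    refine (LinearMap.IsRefl.nondegenerate_iff_separatingLeft (B := Φ.restrict W) (fun x y hxy => hrefl x y hxy)).mpr ?_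
    intro x hx
    have hx' : Φ x x = 0 := by simpa using hx x
    exact Subtype.ext (hzero x (hWm x.2) hx')
  have hcompl2 := LinearMap.BilinForm.isCompl_orthogonal_of_restrict_nondegenerate hrefl hnd
  have hdecomp : ∀ U ∈ N, ∃ A C : L, A ∈ N ∧ (∀ T ∈ c, Φ A T = 0) ∧ C ∈ c ∧ U = A + C := by
    intro U hU
    have hUmem : U ∈ W ⊔ Φ.orthogonal W := by
      rw [codisjoint_iff.mp hcompl2.codisjoint]
      trivial
    obtain ⟨C, hC, A, hA, hCA⟩ := Submodule.mem_sup.mp hUmem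
    have hCc : C ∈ c := hC
    refine ⟨A, C, ?_, ?_, hCc, by rw [← hCA]; abel⟩
    · have hAe : A = U - C := by rw [← hCA]; abel
      rw [hAe]
      exact sub_mem hU (hcN hCc)
    · intro T hT
      rw [hΦsymm]
      exact hA T hT
  set J : LieIdeal ℝ L := ⁅c, c⁆ with hJdef
  have hJle : J ≤ ⁅J, c⁆ := by
    rw [hJdef, LieSubmodule.lie_le_iff]
    intro Y hY T hT
    have hY' : Y ∈ Submodule.span ℝ {z : L | ∃ x ∈ N, ∃ n ∈ N, ⁅x, n⁆ = z} := by
      rw [← LieSubmodule.lieIdeal_oper_eq_linear_span']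
      exact hY
    refine Submodule.span_induction
      (p := fun z _ => ⁅z, T⁆ ∈ (⁅J, c⁆ : LieIdeal ℝ L)) ?_ ?_ ?_ ?_ hY'
    · rintro z ⟨U, hU, V, hV, rfl⟩
      obtain ⟨A₁, C₁, hA₁, hA₁p, hC₁, rfl⟩ := hdecomp U hU
      obtain ⟨A₂, C₂, hA₂, hA₂p, hC₂, rfl⟩ := hdecomp V hV
      have k1 := key A₁ hA₁ hA₁p
      have k2 := key A₂ hA₂ hA₂p
      have hCA2 : ⁅C₁, A₂⁆ = 0 := by
        rw [← lie_skew, k2 C₁ hC₁, neg_zero]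
      have hb : ⁅A₁ + C₁, A₂ + C₂⁆ = ⁅A₁, A₂⁆ + ⁅C₁, C₂⁆ := by
        rw [add_lie, lie_add, lie_add, k1 C₂ hC₂, hCA2]
        abel
      rw [hb, add_lie]
      have hAAT : ⁅⁅A₁, A₂⁆, T⁆ = 0 := by
        rw [lie_lie, k1 T hT, k2 T hT, lie_zero, lie_zero, sub_zero]
      rw [hAAT, zero_add]
      exact LieSubmodule.lie_mem_lie (LieSubmodule.lie_mem_lie hC₁ hC₂) hT
    · simp only [zero_lie]
      exact LieSubmodule.zero_mem _
    · intro x y _ _ hx hy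
      rw [add_lie]
      exact add_mem hx hy
    · intro a x _ hx
      rw [smul_lie]
      exact SMulMemClass.smul_mem a hx
  have hJlcs : ∀ n, J ≤ N.lcs L n := by
    intro n
    induction n with
    | zero => exact le_top
    | succ n ih =>
      refine le_trans hJle ?_
      rw [LieSubmodule.lie_comm J c, LieIdeal.lcs_succ]
      exact LieSubmodule.mono_lie hcN ih
  have hJbot : J = ⊥ := le_bot_iff.mp (hk ▸ hJlcs k)
  refine ⟨key, ?_⟩
  intro X hX Y hY
  obtain ⟨A, C, hA, hAperp, hC, rfl⟩ := hdecomp X hX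
  rw [add_lie, key A hA hAperp Y hY, zero_add]
  have hCY : ⁅C, Y⁆ ∈ J := LieSubmodule.lie_mem_lie hC hY
  rw [hJbot, LieSubmodule.mem_bot] at hCY
  exact hCY
end

section
/- Let $\mathfrak{g} = \mathfrak{h}\oplus\mathfrak{m}$ be a reductive decomposition with $B(\mathfrak{h},\mathfrak{m})=0$ satisfying the GO-property, let $A:\mathfrak{m}\to\mathfrak{m}$ represent $B$ via $(\cdot,\cdot)$, and let $A_\alpha, A_\beta$ be eigenspaces with nonzero distinct eigenvalues $\alpha \neq \beta$. Then for every $X \in A_\alpha$ and $Y \in A_\beta$ there exists $Z \in \mathfrak{h}$ with $(\beta-\alpha)[X,Y] = \beta[Z,X] + \alpha[Z,Y]$; in particular $[A_\alpha, A_\beta] \subseteq A_\alpha \oplus A_\beta$. -/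
/-!
Write `A_γ` for the `γ`-eigenspace of `A` in `𝔪`. Because `Φ` is `ad 𝔥`-invariant and `A`
represents the invariant form `B`, `A` commutes with `ad 𝔥` on `𝔪`; so `ad 𝔥` preserves every
`A_γ`, and distinct eigenspaces are orthogonal for `Φ` and for `B`. This already gives
`[X, Y] ∈ 𝔪`.

As `B(𝔥, 𝔪) = 0`, we have `B(ξ, w) = Φ(π_𝔪 ξ, A w)`, which turns the geodesic condition at `V`
into the Kowalski–Vanhecke criterion `A π_𝔪 [V + Z, A⁻¹ V] = 0`. For `V = X + Y` one has
`αβ [V + Z, A⁻¹ V] = η := (α - β)[X, Y] + β[Z, X] + α[Z, Y]`, so `η ∈ A_0`. Finally `[X, Y]` is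
`Φ`-orthogonal to `A_0` (geodesic condition at `n` and at `X + n` for `n ∈ A_0`), and so are
`[Z, X] ∈ A_α` and `[Z, Y] ∈ A_β`; hence `Φ(η, η) = 0`, i.e. `η = 0`.
-/

open LinearMap (BilinForm)

lemma LinearMap.BilinForm.apply_eq_zero_of_eigenvalue_ne {K M : Type*} [Field K]
    [AddCommGroup M] [Module K M] {Φ : BilinForm K M} {A : Module.End K M} {p q : M} {γ δ : K}
    (hA : Φ (A p) q = Φ p (A q)) (hp : A p = γ • p) (hq : A q = δ • q) (hγδ : γ ≠ δ) :
    Φ p q = 0 := by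
  rw [hp, hq, map_smul, LinearMap.smul_apply, map_smul, smul_eq_mul, smul_eq_mul] at hA
  exact (mul_eq_zero.mp (by linear_combination hA : (γ - δ) * Φ p q = 0)).resolve_left
    (sub_ne_zero.mpr hγδ)

lemma LinearMap.BilinForm.lieInvariant.apply_lie {R L : Type*} [CommRing R] [LieRing L]
    [LieAlgebra R L] {B : BilinForm R L} (hB : B.lieInvariant L) (x y z : L) :
    B ⁅x, y⁆ z = B x ⁅y, z⁆ := by
  rw [← lie_skew, map_neg, LinearMap.neg_apply, hB, neg_neg]

namespace GOSpace

variable {K L : Type*} [Field K] [LieRing L] [LieAlgebra K L]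
  {h : LieSubalgebra K L} {m : Submodule K L} {B Φ : BilinForm K L} {A πm : L →ₗ[K] L}

lemma apply_map_symm_of_represents (hB : B.IsSymm) (hΦ : Φ.IsSymm)
    (hAB : ∀ x ∈ m, ∀ y ∈ m, B x y = Φ (A x) y) : ∀ x ∈ m, ∀ y ∈ m, Φ (A x) y = Φ x (A y) :=
  fun x hx y hy => by rw [← hAB x hx y hy, hB.eq, hAB y hy x hx, hΦ.eq]

lemma map_lie_eq_lie_map (hBinv : B.lieInvariant L) (hΦaniso : ∀ x ∈ m, Φ x x = 0 → x = 0)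
    (hΦinv : ∀ Z ∈ h, ∀ x ∈ m, ∀ y ∈ m, Φ ⁅Z, x⁆ y + Φ x ⁅Z, y⁆ = 0)
    (hadm : ∀ Z ∈ h, ∀ x ∈ m, ⁅Z, x⁆ ∈ m) (hAm : ∀ x ∈ m, A x ∈ m)
    (hAB : ∀ x ∈ m, ∀ y ∈ m, B x y = Φ (A x) y) : ∀ Z ∈ h, ∀ x ∈ m, A ⁅Z, x⁆ = ⁅Z, A x⁆ := by
  intro Z hZ x hx
  have hdm : A ⁅Z, x⁆ - ⁅Z, A x⁆ ∈ m :=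
    m.sub_mem (hAm _ (hadm Z hZ x hx)) (hadm Z hZ _ (hAm x hx))
  have horth : ∀ w ∈ m, Φ (A ⁅Z, x⁆ - ⁅Z, A x⁆) w = 0 := by
    intro w hw
    rw [map_sub, LinearMap.sub_apply, ← hAB _ (hadm Z hZ x hx) w hw, hBinv,
      hAB x hx _ (hadm Z hZ w hw)]
    linear_combination -hΦinv Z hZ (A x) (hAm x hx) w hw
  exact sub_eq_zero.mp (hΦaniso _ hdm (horth _ hdm))

lemma map_lie_eq_smul (hcomm : ∀ Z ∈ h, ∀ x ∈ m, A ⁅Z, x⁆ = ⁅Z, A x⁆) {Z x : L} {γ : K}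
    (hZ : Z ∈ h) (hx : x ∈ m) (hxe : A x = γ • x) : A ⁅Z, x⁆ = γ • ⁅Z, x⁆ := by
  rw [hcomm Z hZ x hx, hxe, lie_smul]

lemma apply_lie_eq_zero_of_eigenvalue_ne (hadm : ∀ Z ∈ h, ∀ x ∈ m, ⁅Z, x⁆ ∈ m)
    (hcomm : ∀ Z ∈ h, ∀ x ∈ m, A ⁅Z, x⁆ = ⁅Z, A x⁆)
    (hAsymm : ∀ x ∈ m, ∀ y ∈ m, Φ (A x) y = Φ x (A y)) {Z y p : L} {β γ : K}
    (hZ : Z ∈ h) (hy : y ∈ m) (hye : A y = β • y) (hp : p ∈ m) (hpe : A p = γ • p)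
    (hβγ : β ≠ γ) : Φ ⁅Z, y⁆ p = 0 :=
  Φ.apply_eq_zero_of_eigenvalue_ne (hAsymm _ (hadm Z hZ y hy) p hp)
    (map_lie_eq_smul hcomm hZ hy hye) hpe hβγ

lemma represented_eq_zero_of_eigenvalue_ne (hAsymm : ∀ x ∈ m, ∀ y ∈ m, Φ (A x) y = Φ x (A y))
    (hAB : ∀ x ∈ m, ∀ y ∈ m, B x y = Φ (A x) y) {p q : L} {γ δ : K} (hp : p ∈ m) (hq : q ∈ m)
    (hpe : A p = γ • p) (hqe : A q = δ • q) (hγδ : γ ≠ δ) : B p q = 0 := by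
  rw [hAB p hp q hq, hpe, map_smul, LinearMap.smul_apply,
    Φ.apply_eq_zero_of_eigenvalue_ne (hAsymm p hp q hq) hpe hqe hγδ, smul_zero]

lemma sub_proj_mem (hcompl : IsCompl h.toSubmodule m) (hπid : ∀ x ∈ m, πm x = x)
    (hπh : ∀ x ∈ h, πm x = 0) (ξ : L) : ξ - πm ξ ∈ h := by
  obtain ⟨a, ha, b, hb, rfl⟩ :=
    Submodule.mem_sup.mp (hcompl.sup_eq_top ▸ Submodule.mem_top (x := ξ))
  rwa [map_add, hπh a ha, hπid b hb, zero_add, add_sub_cancel_right]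

lemma apply_proj_map_eq (hB : B.IsSymm) (hmB : ∀ x ∈ m, ∀ W ∈ h, B x W = 0)
    (hAsymm : ∀ x ∈ m, ∀ y ∈ m, Φ (A x) y = Φ x (A y))
    (hAB : ∀ x ∈ m, ∀ y ∈ m, B x y = Φ (A x) y) (hπmem : ∀ x, πm x ∈ m)
    (hπsub : ∀ ξ, ξ - πm ξ ∈ h) : ∀ ξ, ∀ w ∈ m, Φ (πm ξ) (A w) = B ξ w := by
  intro ξ w hw
  have hξ : B (ξ - πm ξ) w = 0 := by rw [hB.eq]; exact hmB w hw _ (hπsub ξ)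
  rw [map_sub, LinearMap.sub_apply, sub_eq_zero] at hξ
  rw [hξ, hAB _ (hπmem ξ) w hw, hAsymm _ (hπmem ξ) w hw]

lemma lie_mem_of_eigenvalue_ne (hBinv : B.lieInvariant L)
    (hm : ∀ x, (∀ W ∈ h, B x W = 0) → x ∈ m) (hadm : ∀ Z ∈ h, ∀ x ∈ m, ⁅Z, x⁆ ∈ m)
    (hcomm : ∀ Z ∈ h, ∀ x ∈ m, A ⁅Z, x⁆ = ⁅Z, A x⁆)
    (hAsymm : ∀ x ∈ m, ∀ y ∈ m, Φ (A x) y = Φ x (A y))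
    (hAB : ∀ x ∈ m, ∀ y ∈ m, B x y = Φ (A x) y) {X Y : L} {α β : K}
    (hX : X ∈ m) (hXe : A X = α • X) (hY : Y ∈ m) (hYe : A Y = β • Y) (hαβ : α ≠ β) :
    ⁅X, Y⁆ ∈ m := by
  refine hm _ fun W hW => ?_
  rw [hBinv.apply_lie, ← lie_skew, map_neg, neg_eq_zero]
  exact represented_eq_zero_of_eigenvalue_ne hAsymm hAB hX (hadm W hW Y hY) hXe
    (map_lie_eq_smul hcomm hW hY hYe) hαβ

lemma map_proj_lie_eq_zero_of_go (hBinv : B.lieInvariant L)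
    (hΦaniso : ∀ x ∈ m, Φ x x = 0 → x = 0) (hAm : ∀ x ∈ m, A x ∈ m)
    (hAsymm : ∀ x ∈ m, ∀ y ∈ m, Φ (A x) y = Φ x (A y))
    (hπmem : ∀ x, πm x ∈ m) (hπB : ∀ ξ, ∀ w ∈ m, Φ (πm ξ) (A w) = B ξ w) {V V' Z : L}
    (hV' : V' ∈ m) (hAV' : A V' = V) (hgo : ∀ W ∈ m, Φ (πm ⁅V + Z, W⁆) V = 0) :
    A (πm ⁅V + Z, V'⁆) = 0 := by
  have horth : ∀ W ∈ m, Φ (A (πm ⁅V + Z, V'⁆)) W = 0 := fun W hW => by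
    rw [hAsymm _ (hπmem _) W hW, hπB _ W hW, hBinv.apply_lie, ← lie_skew, map_neg,
      ← hBinv.apply_lie, ← hπB _ V' hV', hAV', hgo W hW, neg_zero]
  have hm : A (πm ⁅V + Z, V'⁆) ∈ m := hAm _ (hπmem _)
  exact hΦaniso _ hm (horth _ hm)

lemma exists_map_eq_zero_of_go (hGO : ∀ X ∈ m, ∃ Z ∈ h, ∀ W ∈ m, Φ (πm ⁅X + Z, W⁆) X = 0)
    (hBinv : B.lieInvariant L) (hΦaniso : ∀ x ∈ m, Φ x x = 0 → x = 0)
    (hAm : ∀ x ∈ m, A x ∈ m) (hAsymm : ∀ x ∈ m, ∀ y ∈ m, Φ (A x) y = Φ x (A y))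
    (hπmem : ∀ x, πm x ∈ m) (hπid : ∀ x ∈ m, πm x = x)
    (hπB : ∀ ξ, ∀ w ∈ m, Φ (πm ξ) (A w) = B ξ w) (hadm : ∀ Z ∈ h, ∀ x ∈ m, ⁅Z, x⁆ ∈ m)
    {X Y : L} {α β : K} (hX : X ∈ m) (hXe : A X = α • X) (hY : Y ∈ m) (hYe : A Y = β • Y)
    (hα : α ≠ 0) (hβ : β ≠ 0) (hXY : ⁅X, Y⁆ ∈ m) :
    ∃ Z ∈ h, (α - β) • ⁅X, Y⁆ + β • ⁅Z, X⁆ + α • ⁅Z, Y⁆ ∈ m ∧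
      A ((α - β) • ⁅X, Y⁆ + β • ⁅Z, X⁆ + α • ⁅Z, Y⁆) = 0 := by
  obtain ⟨Z, hZ, hgo⟩ := hGO (X + Y) (m.add_mem hX hY)
  have hηm : (α - β) • ⁅X, Y⁆ + β • ⁅Z, X⁆ + α • ⁅Z, Y⁆ ∈ m :=
    m.add_mem (m.add_mem (m.smul_mem _ hXY) (m.smul_mem _ (hadm Z hZ X hX)))
      (m.smul_mem _ (hadm Z hZ Y hY))
  have hinv : A (α⁻¹ • X + β⁻¹ • Y) = X + Y := by
    rw [map_add, map_smul, map_smul, hXe, hYe, inv_smul_smul₀ hα, inv_smul_smul₀ hβ]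
  have hbr : (α * β) • ⁅X + Y + Z, α⁻¹ • X + β⁻¹ • Y⁆ =
      (α - β) • ⁅X, Y⁆ + β • ⁅Z, X⁆ + α • ⁅Z, Y⁆ := by
    simp only [add_lie, lie_add, lie_smul, lie_self, ← lie_skew Y X]
    match_scalars <;> field_simp
    ring
  refine ⟨Z, hZ, hηm, ?_⟩
  rw [← hπid _ hηm, ← hbr, map_smul, map_smul,
    map_proj_lie_eq_zero_of_go hBinv hΦaniso hAm hAsymm hπmem hπB
      (m.add_mem (m.smul_mem _ hX) (m.smul_mem _ hY)) hinv hgo, smul_zero]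

lemma apply_proj_eq_zero_of_eigen (hπB : ∀ ξ, ∀ w ∈ m, Φ (πm ξ) (A w) = B ξ w) {ξ x : L}
    {γ : K} (hx : x ∈ m) (hxe : A x = γ • x) (hγ : γ ≠ 0) (hξ : B ξ x = 0) :
    Φ (πm ξ) x = 0 := by
  have key := hπB ξ x hx
  rw [hxe, map_smul, smul_eq_mul, hξ] at key
  exact (mul_eq_zero.mp key).resolve_left hγ

lemma apply_proj_lie_self_eq_zero_of_ker
    (hGO : ∀ X ∈ m, ∃ Z ∈ h, ∀ W ∈ m, Φ (πm ⁅X + Z, W⁆) X = 0)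
    (hπid : ∀ x ∈ m, πm x = x) (hadm : ∀ Z ∈ h, ∀ x ∈ m, ⁅Z, x⁆ ∈ m)
    (hcomm : ∀ Z ∈ h, ∀ x ∈ m, A ⁅Z, x⁆ = ⁅Z, A x⁆)
    (hAsymm : ∀ x ∈ m, ∀ y ∈ m, Φ (A x) y = Φ x (A y)) {n Y : L} {β : K}
    (hn : n ∈ m) (hAn : A n = 0) (hY : Y ∈ m) (hYe : A Y = β • Y) (hβ : β ≠ 0) :
    Φ (πm ⁅n, Y⁆) n = 0 := by
  obtain ⟨Z, hZ, hgo⟩ := hGO n hn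
  have key := hgo Y hY
  rwa [add_lie, map_add, map_add, LinearMap.add_apply, hπid _ (hadm Z hZ Y hY),
    apply_lie_eq_zero_of_eigenvalue_ne hadm hcomm hAsymm hZ hY hYe hn
      (by rw [hAn, zero_smul]) hβ, add_zero] at key

lemma apply_lie_eq_zero_of_ker
    (hGO : ∀ X ∈ m, ∃ Z ∈ h, ∀ W ∈ m, Φ (πm ⁅X + Z, W⁆) X = 0) (hBinv : B.lieInvariant L)
    (hπid : ∀ x ∈ m, πm x = x) (hπB : ∀ ξ, ∀ w ∈ m, Φ (πm ξ) (A w) = B ξ w)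
    (hadm : ∀ Z ∈ h, ∀ x ∈ m, ⁅Z, x⁆ ∈ m) (hcomm : ∀ Z ∈ h, ∀ x ∈ m, A ⁅Z, x⁆ = ⁅Z, A x⁆)
    (hAsymm : ∀ x ∈ m, ∀ y ∈ m, Φ (A x) y = Φ x (A y))
    (hAB : ∀ x ∈ m, ∀ y ∈ m, B x y = Φ (A x) y) {X Y n : L} {α β : K}
    (hX : X ∈ m) (hXe : A X = α • X) (hY : Y ∈ m) (hYe : A Y = β • Y)
    (hα : α ≠ 0) (hβ : β ≠ 0) (hαβ : α ≠ β) (hXY : ⁅X, Y⁆ ∈ m) (hn : n ∈ m) (hAn : A n = 0) :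
    Φ ⁅X, Y⁆ n = 0 := by
  have hAn' : A n = (0 : K) • n := by rw [hAn, zero_smul]
  obtain ⟨Z, hZ, hgo⟩ := hGO (X + n) (m.add_mem hX hn)
  -- of the six terms of `Φ (πm ⁅X + n + Z, Y⁆) (X + n) = 0`, all but `Φ ⁅X, Y⁆ n` vanish
  have key := hgo Y hY
  simp only [add_lie, map_add, LinearMap.add_apply, hπid _ hXY, hπid _ (hadm Z hZ Y hY)] at key
  have hXYX : Φ ⁅X, Y⁆ X = 0 := by
    rw [← hπid _ hXY]
    exact apply_proj_eq_zero_of_eigen hπB hX hXe hα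
      (by rw [hBinv, lie_self, map_zero, neg_zero])
  have hnYX : Φ (πm ⁅n, Y⁆) X = 0 := by
    refine apply_proj_eq_zero_of_eigen hπB hX hXe hα ?_
    rw [hBinv.apply_lie, hAB n hn _ (by rw [← lie_skew]; exact m.neg_mem hXY), hAn,
      LinearMap.map_zero₂]
  rw [hXYX, hnYX, apply_proj_lie_self_eq_zero_of_ker hGO hπid hadm hcomm hAsymm hn hAn hY hYe hβ,
    apply_lie_eq_zero_of_eigenvalue_ne hadm hcomm hAsymm hZ hY hYe hX hXe hαβ.symm,
    apply_lie_eq_zero_of_eigenvalue_ne hadm hcomm hAsymm hZ hY hYe hn hAn' hβ] at key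
  simpa using key

lemma exists_smul_lie_eq_of_go
    (hGO : ∀ X ∈ m, ∃ Z ∈ h, ∀ W ∈ m, Φ (πm ⁅X + Z, W⁆) X = 0) (hBinv : B.lieInvariant L)
    (hΦaniso : ∀ x ∈ m, Φ x x = 0 → x = 0) (hAm : ∀ x ∈ m, A x ∈ m)
    (hAsymm : ∀ x ∈ m, ∀ y ∈ m, Φ (A x) y = Φ x (A y)) (hAB : ∀ x ∈ m, ∀ y ∈ m, B x y = Φ (A x) y)
    (hπmem : ∀ x, πm x ∈ m) (hπid : ∀ x ∈ m, πm x = x)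
    (hπB : ∀ ξ, ∀ w ∈ m, Φ (πm ξ) (A w) = B ξ w) (hadm : ∀ Z ∈ h, ∀ x ∈ m, ⁅Z, x⁆ ∈ m)
    (hcomm : ∀ Z ∈ h, ∀ x ∈ m, A ⁅Z, x⁆ = ⁅Z, A x⁆) {X Y : L} {α β : K}
    (hX : X ∈ m) (hXe : A X = α • X) (hY : Y ∈ m) (hYe : A Y = β • Y)
    (hα : α ≠ 0) (hβ : β ≠ 0) (hαβ : α ≠ β) (hXY : ⁅X, Y⁆ ∈ m) :
    ∃ Z ∈ h, (β - α) • ⁅X, Y⁆ = β • ⁅Z, X⁆ + α • ⁅Z, Y⁆ := by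
  obtain ⟨Z, hZ, hηm, hAη⟩ := exists_map_eq_zero_of_go hGO hBinv hΦaniso hAm hAsymm hπmem hπid
    hπB hadm hX hXe hY hYe hα hβ hXY
  set η := (α - β) • ⁅X, Y⁆ + β • ⁅Z, X⁆ + α • ⁅Z, Y⁆ with hη_def
  have hAη' : A η = (0 : K) • η := by rw [hAη, zero_smul]
  have hη : η = 0 := by
    refine hΦaniso _ hηm ?_
    nth_rw 1 [hη_def]
    simp only [map_add, map_smul, LinearMap.add_apply, LinearMap.smul_apply,
      apply_lie_eq_zero_of_ker hGO hBinv hπid hπB hadm hcomm hAsymm hAB hX hXe hY hYe hα hβ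
        hαβ hXY hηm hAη,
      apply_lie_eq_zero_of_eigenvalue_ne hadm hcomm hAsymm hZ hX hXe hηm hAη' hα,
      apply_lie_eq_zero_of_eigenvalue_ne hadm hcomm hAsymm hZ hY hYe hηm hAη' hβ, smul_zero,
      add_zero]
  exact ⟨Z, hZ, by linear_combination (norm := module) -hη⟩

end GOSpace

open GOSpace in
/-- GO setting with `𝔪 = {X : B(X,𝔥)=0}` and `A` the `(·,·)`-symmetric operator on
`𝔪` representing the Killing form `B`. If `X ∈ A_α`, `Y ∈ A_β` with `0 ≠ α ≠ β ≠ 0`, then there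
is `Z ∈ 𝔥` with `(β-α)[X,Y] = β[Z,X] + α[Z,Y]`; in particular `[A_α,A_β] ⊆ A_α ⊕ A_β`. -/
theorem go_space_bracket_of_eigenspaces
    (L : Type*) [LieRing L] [LieAlgebra ℝ L] [FiniteDimensional ℝ L]
    (h : LieSubalgebra ℝ L) (m : Submodule ℝ L)
    (hcompl : IsCompl h.toSubmodule m)
    (hmchar : ∀ x : L, x ∈ m ↔ ∀ W ∈ h, killingForm ℝ L x W = 0)
    (hadm : ∀ Z ∈ h, ∀ x ∈ m, ⁅Z, x⁆ ∈ m)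
    (Φ : LinearMap.BilinForm ℝ L)
    (hΦsymm : ∀ x y : L, Φ x y = Φ y x)
    (hΦpos : ∀ x ∈ m, x ≠ 0 → 0 < Φ x x)
    (hΦinv : ∀ Z ∈ h, ∀ x ∈ m, ∀ y ∈ m, Φ ⁅Z, x⁆ y + Φ x ⁅Z, y⁆ = 0)
    (πm : L →ₗ[ℝ] L)
    (hπmem : ∀ x : L, πm x ∈ m) (hπid : ∀ x ∈ m, πm x = x) (hπh : ∀ x ∈ h, πm x = 0)
    (hGO : ∀ X ∈ m, ∃ Z ∈ h, ∀ W ∈ m, Φ (πm ⁅X + Z, W⁆) X = 0)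
    (A : L →ₗ[ℝ] L)
    (hAm : ∀ x ∈ m, A x ∈ m)
    (hAB : ∀ x ∈ m, ∀ y ∈ m, killingForm ℝ L x y = Φ (A x) y)
    (α β : ℝ) (hα : α ≠ 0) (hβ : β ≠ 0) (hαβ : α ≠ β)
    (X : L) (hX : X ∈ m) (hXe : A X = α • X)
    (Y : L) (hY : Y ∈ m) (hYe : A Y = β • Y) :
    (∃ Z ∈ h, (β - α) • ⁅X, Y⁆ = β • ⁅Z, X⁆ + α • ⁅Z, Y⁆) ∧
      ∃ u v : L, u ∈ m ∧ A u = α • u ∧ v ∈ m ∧ A v = β • v ∧ ⁅X, Y⁆ = u + v := by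
  have hBsymm : (killingForm ℝ L).IsSymm := ⟨LieModule.traceForm_comm ℝ L L⟩
  have hBinv := LieModule.traceForm_lieInvariant ℝ L L
  have hΦaniso : ∀ x ∈ m, Φ x x = 0 → x = 0 := fun x hx h0 => by
    by_contra hne
    exact (hΦpos x hx hne).ne' h0
  have hAsymm := apply_map_symm_of_represents hBsymm ⟨hΦsymm⟩ hAB
  have hcomm := map_lie_eq_lie_map hBinv hΦaniso hΦinv hadm hAm hAB
  have hπB := apply_proj_map_eq hBsymm (fun x hx => (hmchar x).1 hx) hAsymm hAB hπmem
    (sub_proj_mem hcompl hπid hπh)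
  have hXY := lie_mem_of_eigenvalue_ne hBinv (fun x => (hmchar x).2) hadm hcomm hAsymm hAB
    hX hXe hY hYe hαβ
  obtain ⟨Z, hZ, hmain⟩ := exists_smul_lie_eq_of_go hGO hBinv hΦaniso hAm hAsymm hAB hπmem hπid
    hπB hadm hcomm hX hXe hY hYe hα hβ hαβ hXY
  refine ⟨⟨Z, hZ, hmain⟩, ((β - α)⁻¹ * β) • ⁅Z, X⁆, ((β - α)⁻¹ * α) • ⁅Z, Y⁆,
    m.smul_mem _ (hadm Z hZ X hX), ?_, m.smul_mem _ (hadm Z hZ Y hY), ?_, ?_⟩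
  · rw [map_smul, map_lie_eq_smul hcomm hZ hX hXe, smul_comm]
  · rw [map_smul, map_lie_eq_smul hcomm hZ hY hYe, smul_comm]
  · rw [mul_smul, mul_smul, ← smul_add, ← hmain, inv_smul_smul₀ (sub_ne_zero.mpr hαβ.symm)]
end

section
/- In the setting of the preceding statement (GO-property, eigenspaces $A_\alpha$, $A_\beta$ with $0 \neq \alpha \neq \beta \neq 0$): for every $X \in A_\alpha$ and $Y \in A_\beta$ there exist $Z_1 \in C_{\mathfrak{h}}(X)$ and $Z_2 \in C_{\mathfrak{h}}(Y)$ such that $[X,Y] = [Z_2,X] + [Z_1,Y]$. In particular, if $C_{\mathfrak{h}}(X) = 0$ then $[X,Y] \in A_\alpha$, if $C_{\mathfrak{h}}(Y) = 0$ then $[X,Y] \in A_\beta$, and if both centralizers vanish then $[X,Y] = 0$. -/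
/-!
Both the Killing form `B` and the inner product `Φ` on `𝔪` are `ad 𝔥`-invariant and
`B = Φ (A ·) ·` on `𝔪`, so `A` is `Φ`-symmetric and commutes with `ad 𝔥`: distinct eigenspaces
of `A` are `Φ`-orthogonal and `ad 𝔥` preserves each of them, which already puts `[X, Y]` in `𝔪`.

Writing the GO condition for `βX + αY` and converting the `Φ`-pairings with the eigenvectors
`X`, `Y` into Killing-form pairings gives `Z ∈ 𝔥` with `(β - α) A[X, Y] = β[Z, X] + α[Z, Y]`.
The GO condition for `X + s w`, with `w ∈ ker A ∩ 𝔪` in the radical of `B`, shows that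
`[X, Y]` is `Φ`-orthogonal to `ker A`, so `A` can be cancelled:
`(β - α)[X, Y] = (β/α)[Z, X] + (α/β)[Z, Y]`. Doing the same for `-Y` (with `Z'`) and adding,
an `α`-eigenvector `(β/α)[Z + Z', X]` plus a `β`-eigenvector `(α/β)[Z - Z', Y]` vanish, so both
do; subtracting instead expresses `[X, Y]` through multiples of `Z - Z'` and `Z + Z'`.
-/

open LinearMap (BilinForm)

section LinearAlgebra

variable {R M : Type*} [CommRing R] [AddCommGroup M] [Module R M]
  {p m : Submodule R M} {B Φ : BilinForm R M} {A π : M →ₗ[R] M}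

theorem sub_apply_mem_of_isCompl (hcompl : IsCompl p m) (hπid : ∀ x ∈ m, π x = x)
    (hπp : ∀ x ∈ p, π x = 0) (x : M) : x - π x ∈ p := by
  have hx : x ∈ p ⊔ m := hcompl.sup_eq_top ▸ Submodule.mem_top
  obtain ⟨u, hu, v, hv, rfl⟩ := Submodule.mem_sup.mp hx
  simpa [hπp u hu, hπid v hv] using hu

theorem bilinForm_apply_proj (hcompl : IsCompl p m) (hπid : ∀ x ∈ m, π x = x)
    (hπp : ∀ x ∈ p, π x = 0) (hmB : ∀ x ∈ m, ∀ W ∈ p, B x W = 0) {x : M} (hx : x ∈ m)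
    (u : M) : B x (π u) = B x u := by
  have := hmB x hx _ (sub_apply_mem_of_isCompl hcompl hπid hπp u)
  rwa [map_sub, sub_eq_zero, eq_comm] at this

theorem bilinForm_eq_zero_of_eigenvalue_ne [NoZeroDivisors R] (hB : ∀ x y, B x y = B y x)
    (hΦ : ∀ x y, Φ x y = Φ y x) (hAB : ∀ x ∈ m, ∀ y ∈ m, B x y = Φ (A x) y)
    {u v : M} (hu : u ∈ m) (hv : v ∈ m) {γ δ : R} (hγδ : γ ≠ δ)
    (hAu : A u = γ • u) (hAv : A v = δ • v) : Φ u v = 0 := by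
  have hγ : B u v = γ * Φ u v := by rw [hAB u hu v hv, hAu, LinearMap.map_smul₂, smul_eq_mul]
  have hδ : B u v = δ * Φ u v := by
    rw [hB, hAB v hv u hu, hAv, LinearMap.map_smul₂, smul_eq_mul, hΦ]
  have : (γ - δ) * Φ u v = 0 := by linear_combination hδ - hγ
  exact (mul_eq_zero.mp this).resolve_left (sub_ne_zero.mpr hγδ)

end LinearAlgebra

section PositiveDefinite

variable {M : Type*} [AddCommGroup M] [Module ℝ M] {m : Submodule ℝ M} {Φ : BilinForm ℝ M}

theorem eq_zero_of_bilinForm_self_eq_zero (hΦpos : ∀ x ∈ m, x ≠ 0 → 0 < Φ x x) {x : M}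
    (hx : x ∈ m) (h : Φ x x = 0) : x = 0 := by
  by_contra hne
  exact (hΦpos x hx hne).ne' h

theorem eq_zero_of_smul_add_smul_eq_zero (hΦ : ∀ x y, Φ x y = Φ y x)
    (hΦpos : ∀ x ∈ m, x ≠ 0 → 0 < Φ x x) {u v : M} (hu : u ∈ m) (huv : Φ u v = 0)
    {a b : ℝ} (ha : a ≠ 0) (hb : b ≠ 0) (h : a • u + b • v = 0) : u = 0 ∧ v = 0 := by
  have huu : a * Φ u u = 0 := by
    simpa [hΦ v u, huv] using congrArg (Φ · u) h
  have hu0 : u = 0 := eq_zero_of_bilinForm_self_eq_zero hΦpos hu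
    ((mul_eq_zero.mp huu).resolve_left ha)
  refine ⟨hu0, ?_⟩
  rw [hu0, smul_zero, zero_add] at h
  exact (smul_eq_zero.mp h).resolve_left hb

theorem eq_of_apply_eq_of_forall_ker (hΦpos : ∀ x ∈ m, x ≠ 0 → 0 < Φ x x)
    (A : M →ₗ[ℝ] M) {x y : M} (hx : x ∈ m) (hy : y ∈ m) (hA : A x = A y)
    (hxK : ∀ w ∈ m, A w = 0 → Φ x w = 0) (hyK : ∀ w ∈ m, A w = 0 → Φ y w = 0) : x = y := by
  have hd : x - y ∈ m := sub_mem hx hy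
  have hAd : A (x - y) = 0 := by rw [map_sub, hA, sub_self]
  refine sub_eq_zero.mp (eq_zero_of_bilinForm_self_eq_zero hΦpos hd ?_)
  rw [LinearMap.map_sub₂, hxK _ hd hAd, hyK _ hd hAd, sub_zero]

end PositiveDefinite

section Lie

variable {L : Type*} [LieRing L] [LieAlgebra ℝ L] {h : LieSubalgebra ℝ L} {m : Submodule ℝ L}
  {B Φ : BilinForm ℝ L} {A π : L →ₗ[ℝ] L}

theorem apply_lie_eq_lie_apply (hBinv : ∀ x y z, B ⁅x, y⁆ z = B x ⁅y, z⁆)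
    (hadm : ∀ Z ∈ h, ∀ x ∈ m, ⁅Z, x⁆ ∈ m) (hΦpos : ∀ x ∈ m, x ≠ 0 → 0 < Φ x x)
    (hΦinv : ∀ Z ∈ h, ∀ x ∈ m, ∀ y ∈ m, Φ ⁅Z, x⁆ y + Φ x ⁅Z, y⁆ = 0)
    (hAm : ∀ x ∈ m, A x ∈ m) (hAB : ∀ x ∈ m, ∀ y ∈ m, B x y = Φ (A x) y)
    {Z : L} (hZ : Z ∈ h) {x : L} (hx : x ∈ m) : A ⁅Z, x⁆ = ⁅Z, A x⁆ := by
  have hd : A ⁅Z, x⁆ - ⁅Z, A x⁆ ∈ m := sub_mem (hAm _ (hadm Z hZ x hx)) (hadm Z hZ _ (hAm x hx))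
  have horth : ∀ y ∈ m, Φ (A ⁅Z, x⁆ - ⁅Z, A x⁆) y = 0 := by
    intro y hy
    have hBZ : B ⁅Z, x⁆ y = -B x ⁅Z, y⁆ := by rw [← lie_skew, LinearMap.map_neg₂, hBinv]
    rw [LinearMap.map_sub₂, ← hAB _ (hadm Z hZ x hx) y hy, hBZ, hAB x hx _ (hadm Z hZ y hy)]
    linear_combination -hΦinv Z hZ _ (hAm x hx) y hy
  exact sub_eq_zero.mp (eq_zero_of_bilinForm_self_eq_zero hΦpos hd (horth _ hd))

theorem apply_lie_eq_smul_lie (hBinv : ∀ x y z, B ⁅x, y⁆ z = B x ⁅y, z⁆)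
    (hadm : ∀ Z ∈ h, ∀ x ∈ m, ⁅Z, x⁆ ∈ m) (hΦpos : ∀ x ∈ m, x ≠ 0 → 0 < Φ x x)
    (hΦinv : ∀ Z ∈ h, ∀ x ∈ m, ∀ y ∈ m, Φ ⁅Z, x⁆ y + Φ x ⁅Z, y⁆ = 0)
    (hAm : ∀ x ∈ m, A x ∈ m) (hAB : ∀ x ∈ m, ∀ y ∈ m, B x y = Φ (A x) y)
    {Z : L} (hZ : Z ∈ h) {x : L} (hx : x ∈ m) {γ : ℝ} (hAx : A x = γ • x) :
    A ⁅Z, x⁆ = γ • ⁅Z, x⁆ := by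
  rw [apply_lie_eq_lie_apply hBinv hadm hΦpos hΦinv hAm hAB hZ hx, hAx, lie_smul]

theorem lie_mem_of_eigenvalue_ne (hB : ∀ x y, B x y = B y x)
    (hBinv : ∀ x y z, B ⁅x, y⁆ z = B x ⁅y, z⁆) (hBm : ∀ x, (∀ W ∈ h, B x W = 0) → x ∈ m)
    (hadm : ∀ Z ∈ h, ∀ x ∈ m, ⁅Z, x⁆ ∈ m) (hΦ : ∀ x y, Φ x y = Φ y x)
    (hΦpos : ∀ x ∈ m, x ≠ 0 → 0 < Φ x x)
    (hΦinv : ∀ Z ∈ h, ∀ x ∈ m, ∀ y ∈ m, Φ ⁅Z, x⁆ y + Φ x ⁅Z, y⁆ = 0)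
    (hAm : ∀ x ∈ m, A x ∈ m) (hAB : ∀ x ∈ m, ∀ y ∈ m, B x y = Φ (A x) y)
    {X Y : L} (hX : X ∈ m) (hY : Y ∈ m) {α β : ℝ} (hαβ : α ≠ β)
    (hXe : A X = α • X) (hYe : A Y = β • Y) : ⁅X, Y⁆ ∈ m := by
  refine hBm _ fun W hW => ?_
  have hWY : ⁅W, Y⁆ ∈ m := hadm W hW Y hY
  have hXWY : Φ X ⁅W, Y⁆ = 0 := bilinForm_eq_zero_of_eigenvalue_ne hB hΦ hAB hX hWY hαβ hXe
    (apply_lie_eq_smul_lie hBinv hadm hΦpos hΦinv hAm hAB hW hY hYe)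
  rw [hBinv, ← lie_skew, map_neg, hAB X hX _ hWY, hXe, LinearMap.map_smul₂, hXWY, smul_zero,
    neg_zero]

theorem exists_bilinForm_proj_lie_eq_of_go (hadm : ∀ Z ∈ h, ∀ x ∈ m, ⁅Z, x⁆ ∈ m)
    (hΦ : ∀ x y, Φ x y = Φ y x)
    (hΦinv : ∀ Z ∈ h, ∀ x ∈ m, ∀ y ∈ m, Φ ⁅Z, x⁆ y + Φ x ⁅Z, y⁆ = 0)
    (hπid : ∀ x ∈ m, π x = x) (hGO : ∀ X ∈ m, ∃ Z ∈ h, ∀ W ∈ m, Φ (π ⁅X + Z, W⁆) X = 0) :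
    ∀ V ∈ m, ∃ Z ∈ h, ∀ W ∈ m, Φ (π ⁅V, W⁆) V = Φ ⁅Z, V⁆ W := by
  intro V hV
  obtain ⟨Z, hZ, hgeod⟩ := hGO V hV
  refine ⟨Z, hZ, fun W hW => ?_⟩
  have := hgeod W hW
  rw [add_lie, map_add, hπid _ (hadm Z hZ W hW), LinearMap.map_add₂] at this
  linear_combination this - hΦinv Z hZ W hW V hV + hΦ W ⁅Z, V⁆

theorem mul_bilinForm_proj_lie (hBinv : ∀ x y z, B ⁅x, y⁆ z = B x ⁅y, z⁆)
    (hBπ : ∀ x ∈ m, ∀ u, B x (π u) = B x u) (hΦ : ∀ x y, Φ x y = Φ y x)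
    (hπmem : ∀ x, π x ∈ m) (hAB : ∀ x ∈ m, ∀ y ∈ m, B x y = Φ (A x) y)
    {x : L} (hx : x ∈ m) {γ : ℝ} (hAx : A x = γ • x) (V W : L) :
    γ * Φ (π ⁅V, W⁆) x = B ⁅x, V⁆ W := by
  rw [hBinv, ← hBπ x hx, hAB x hx _ (hπmem _), hAx, LinearMap.map_smul₂, smul_eq_mul, hΦ]

theorem exists_smul_apply_lie_eq (hBinv : ∀ x y z, B ⁅x, y⁆ z = B x ⁅y, z⁆)
    (hBπ : ∀ x ∈ m, ∀ u, B x (π u) = B x u) (hadm : ∀ Z ∈ h, ∀ x ∈ m, ⁅Z, x⁆ ∈ m)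
    (hΦ : ∀ x y, Φ x y = Φ y x) (hΦpos : ∀ x ∈ m, x ≠ 0 → 0 < Φ x x)
    (hπmem : ∀ x, π x ∈ m) (hgeod : ∀ V ∈ m, ∃ Z ∈ h, ∀ W ∈ m, Φ (π ⁅V, W⁆) V = Φ ⁅Z, V⁆ W)
    (hAm : ∀ x ∈ m, A x ∈ m) (hAB : ∀ x ∈ m, ∀ y ∈ m, B x y = Φ (A x) y)
    {X Y : L} (hX : X ∈ m) (hY : Y ∈ m) (hXY : ⁅X, Y⁆ ∈ m) {α β : ℝ} (hα : α ≠ 0) (hβ : β ≠ 0)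
    (hXe : A X = α • X) (hYe : A Y = β • Y) :
    ∃ Z ∈ h, (β - α) • A ⁅X, Y⁆ = β • ⁅Z, X⁆ + α • ⁅Z, Y⁆ := by
  set V := β • X + α • Y with hV
  obtain ⟨Z, hZ, hZV⟩ := hgeod V (add_mem (m.smul_mem β hX) (m.smul_mem α hY))
  refine ⟨Z, hZ, ?_⟩
  have hd : (β - α) • A ⁅X, Y⁆ - (β • ⁅Z, X⁆ + α • ⁅Z, Y⁆) ∈ m :=
    sub_mem (m.smul_mem _ (hAm _ hXY))
      (add_mem (m.smul_mem _ (hadm Z hZ X hX)) (m.smul_mem _ (hadm Z hZ Y hY)))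
  suffices ∀ W ∈ m, Φ ((β - α) • A ⁅X, Y⁆ - (β • ⁅Z, X⁆ + α • ⁅Z, Y⁆)) W = 0 from
    sub_eq_zero.mp (eq_zero_of_bilinForm_self_eq_zero hΦpos hd (this _ hd))
  intro W hW
  have hXV : ⁅X, V⁆ = α • ⁅X, Y⁆ := by simp [hV]
  have hYV : ⁅Y, V⁆ = -(β • ⁅X, Y⁆) := by rw [hV, ← lie_skew]; simp
  have hVX : Φ (π ⁅V, W⁆) X = B ⁅X, Y⁆ W := mul_left_cancel₀ hα <| by
    rw [mul_bilinForm_proj_lie hBinv hBπ hΦ hπmem hAB hX hXe, hXV, LinearMap.map_smul₂,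
      smul_eq_mul]
  have hVY : Φ (π ⁅V, W⁆) Y = -B ⁅X, Y⁆ W := mul_left_cancel₀ hβ <| by
    rw [mul_bilinForm_proj_lie hBinv hBπ hΦ hπmem hAB hY hYe, hYV, LinearMap.map_neg₂,
      LinearMap.map_smul₂, smul_eq_mul, mul_neg]
  have := hZV W hW
  generalize π ⁅V, W⁆ = u at hVX hVY this
  simp only [hV, map_add, map_smul, lie_add, lie_smul, LinearMap.add_apply,
    LinearMap.smul_apply, smul_eq_mul, hVX, hVY] at this
  simp only [LinearMap.map_sub₂, LinearMap.map_add₂, LinearMap.map_smul₂, smul_eq_mul,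
    ← hAB _ hXY W hW]
  linear_combination this

theorem bilinForm_lie_eq_zero_of_apply_eq_zero (hB : ∀ x y, B x y = B y x)
    (hBinv : ∀ x y z, B ⁅x, y⁆ z = B x ⁅y, z⁆) (hBπ : ∀ x ∈ m, ∀ u, B x (π u) = B x u)
    (hadm : ∀ Z ∈ h, ∀ x ∈ m, ⁅Z, x⁆ ∈ m) (hΦ : ∀ x y, Φ x y = Φ y x)
    (hΦpos : ∀ x ∈ m, x ≠ 0 → 0 < Φ x x)
    (hΦinv : ∀ Z ∈ h, ∀ x ∈ m, ∀ y ∈ m, Φ ⁅Z, x⁆ y + Φ x ⁅Z, y⁆ = 0)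
    (hπmem : ∀ x, π x ∈ m) (hπid : ∀ x ∈ m, π x = x)
    (hgeod : ∀ V ∈ m, ∃ Z ∈ h, ∀ W ∈ m, Φ (π ⁅V, W⁆) V = Φ ⁅Z, V⁆ W)
    (hAm : ∀ x ∈ m, A x ∈ m) (hAB : ∀ x ∈ m, ∀ y ∈ m, B x y = Φ (A x) y)
    {X Y : L} (hX : X ∈ m) (hY : Y ∈ m) (hXY : ⁅X, Y⁆ ∈ m) {α β : ℝ} (hα : α ≠ 0) (hβ : β ≠ 0)
    (hαβ : α ≠ β) (hXe : A X = α • X) (hYe : A Y = β • Y)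
    {w : L} (hw : w ∈ m) (hAw : A w = 0) : Φ ⁅X, Y⁆ w = 0 := by
  have hwe : A w = (0 : ℝ) • w := by rw [hAw, zero_smul]
  have hrad : ∀ z, B w z = 0 := fun z => by
    rw [← hBπ w hw, hAB w hw _ (hπmem z), hAw, map_zero, LinearMap.zero_apply]
  have hXYX : Φ ⁅X, Y⁆ X = 0 := by
    have := mul_bilinForm_proj_lie hBinv hBπ hΦ hπmem hAB hX hXe X Y
    rw [hπid _ hXY, lie_self, map_zero, LinearMap.zero_apply] at this
    exact (mul_eq_zero.mp this).resolve_left hα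
  have hwYX : Φ (π ⁅w, Y⁆) X = 0 := by
    have := mul_bilinForm_proj_lie hBinv hBπ hΦ hπmem hAB hX hXe w Y
    rw [← lie_skew X w, LinearMap.map_neg₂, hBinv, hrad, neg_zero] at this
    exact (mul_eq_zero.mp this).resolve_left hα
  -- the geodesic condition along `X + s • w` is a polynomial identity in `s`
  have hquad : ∀ s : ℝ, s * Φ ⁅X, Y⁆ w + s ^ 2 * Φ (π ⁅w, Y⁆) w = 0 := by
    intro s
    obtain ⟨Z, hZ, hZV⟩ := hgeod (X + s • w) (add_mem hX (m.smul_mem s hw))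
    have hZX : Φ ⁅Z, X⁆ Y = 0 := bilinForm_eq_zero_of_eigenvalue_ne hB hΦ hAB
      (hadm Z hZ X hX) hY hαβ (apply_lie_eq_smul_lie hBinv hadm hΦpos hΦinv hAm hAB hZ hX hXe) hYe
    have hZw : Φ ⁅Z, w⁆ Y = 0 := bilinForm_eq_zero_of_eigenvalue_ne hB hΦ hAB
      (hadm Z hZ w hw) hY hβ.symm (apply_lie_eq_smul_lie hBinv hadm hΦpos hΦinv hAm hAB hZ hw hwe)
      hYe
    have := hZV Y hY
    simp only [add_lie, smul_lie, lie_add, lie_smul, map_add, map_smul, hπid _ hXY,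
      LinearMap.add_apply, LinearMap.smul_apply, smul_eq_mul, hZX, hZw, hXYX, hwYX] at this
    linear_combination this
  linear_combination (hquad 1 - hquad (-1)) / 2

theorem exists_smul_lie_eq (hB : ∀ x y, B x y = B y x)
    (hBinv : ∀ x y z, B ⁅x, y⁆ z = B x ⁅y, z⁆) (hBπ : ∀ x ∈ m, ∀ u, B x (π u) = B x u)
    (hadm : ∀ Z ∈ h, ∀ x ∈ m, ⁅Z, x⁆ ∈ m) (hΦ : ∀ x y, Φ x y = Φ y x)
    (hΦpos : ∀ x ∈ m, x ≠ 0 → 0 < Φ x x)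
    (hΦinv : ∀ Z ∈ h, ∀ x ∈ m, ∀ y ∈ m, Φ ⁅Z, x⁆ y + Φ x ⁅Z, y⁆ = 0)
    (hπmem : ∀ x, π x ∈ m) (hπid : ∀ x ∈ m, π x = x)
    (hgeod : ∀ V ∈ m, ∃ Z ∈ h, ∀ W ∈ m, Φ (π ⁅V, W⁆) V = Φ ⁅Z, V⁆ W)
    (hAm : ∀ x ∈ m, A x ∈ m) (hAB : ∀ x ∈ m, ∀ y ∈ m, B x y = Φ (A x) y)
    {X Y : L} (hX : X ∈ m) (hY : Y ∈ m) (hXY : ⁅X, Y⁆ ∈ m) {α β : ℝ} (hα : α ≠ 0) (hβ : β ≠ 0)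
    (hαβ : α ≠ β) (hXe : A X = α • X) (hYe : A Y = β • Y) :
    ∃ Z ∈ h, (β - α) • ⁅X, Y⁆ = (β / α) • ⁅Z, X⁆ + (α / β) • ⁅Z, Y⁆ := by
  have hcomm {Z x : L} (hZ : Z ∈ h) (hx : x ∈ m) {γ : ℝ} (hAx : A x = γ • x) :
      A ⁅Z, x⁆ = γ • ⁅Z, x⁆ :=
    apply_lie_eq_smul_lie hBinv hadm hΦpos hΦinv hAm hAB hZ hx hAx
  obtain ⟨Z, hZ, hZe⟩ :=
    exists_smul_apply_lie_eq hBinv hBπ hadm hΦ hΦpos hπmem hgeod hAm hAB hX hY hXY hα hβ hXe hYe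
  have hZX := hadm Z hZ X hX
  have hZY := hadm Z hZ Y hY
  refine ⟨Z, hZ, eq_of_apply_eq_of_forall_ker hΦpos A (m.smul_mem _ hXY)
    (add_mem (m.smul_mem _ hZX) (m.smul_mem _ hZY)) ?_ ?_ ?_⟩
  · rw [map_smul, hZe, map_add, map_smul, map_smul, hcomm hZ hX hXe, hcomm hZ hY hYe, smul_smul,
      smul_smul, div_mul_cancel₀ _ hα, div_mul_cancel₀ _ hβ]
  · intro w hw hAw
    rw [LinearMap.map_smul₂, bilinForm_lie_eq_zero_of_apply_eq_zero hB hBinv hBπ hadm hΦ hΦpos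
      hΦinv hπmem hπid hgeod hAm hAB hX hY hXY hα hβ hαβ hXe hYe hw hAw, smul_zero]
  · intro w hw hAw
    have hwe : A w = (0 : ℝ) • w := by rw [hAw, zero_smul]
    rw [LinearMap.map_add₂, LinearMap.map_smul₂, LinearMap.map_smul₂,
      bilinForm_eq_zero_of_eigenvalue_ne hB hΦ hAB hZX hw hα (hcomm hZ hX hXe) hwe,
      bilinForm_eq_zero_of_eigenvalue_ne hB hΦ hAB hZY hw hβ (hcomm hZ hY hYe) hwe,
      smul_zero, smul_zero, add_zero]

theorem exists_centralizer_lie_eq (hB : ∀ x y, B x y = B y x)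
    (hBinv : ∀ x y z, B ⁅x, y⁆ z = B x ⁅y, z⁆) (hBπ : ∀ x ∈ m, ∀ u, B x (π u) = B x u)
    (hadm : ∀ Z ∈ h, ∀ x ∈ m, ⁅Z, x⁆ ∈ m) (hΦ : ∀ x y, Φ x y = Φ y x)
    (hΦpos : ∀ x ∈ m, x ≠ 0 → 0 < Φ x x)
    (hΦinv : ∀ Z ∈ h, ∀ x ∈ m, ∀ y ∈ m, Φ ⁅Z, x⁆ y + Φ x ⁅Z, y⁆ = 0)
    (hπmem : ∀ x, π x ∈ m) (hπid : ∀ x ∈ m, π x = x)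
    (hgeod : ∀ V ∈ m, ∃ Z ∈ h, ∀ W ∈ m, Φ (π ⁅V, W⁆) V = Φ ⁅Z, V⁆ W)
    (hAm : ∀ x ∈ m, A x ∈ m) (hAB : ∀ x ∈ m, ∀ y ∈ m, B x y = Φ (A x) y)
    {X Y : L} (hX : X ∈ m) (hY : Y ∈ m) (hXY : ⁅X, Y⁆ ∈ m) {α β : ℝ} (hα : α ≠ 0) (hβ : β ≠ 0)
    (hαβ : α ≠ β) (hXe : A X = α • X) (hYe : A Y = β • Y) :
    ∃ Z₁ ∈ h, ∃ Z₂ ∈ h, ⁅Z₁, X⁆ = 0 ∧ ⁅Z₂, Y⁆ = 0 ∧ ⁅X, Y⁆ = ⁅Z₂, X⁆ + ⁅Z₁, Y⁆ := by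
  have hcomm {Z x : L} (hZ : Z ∈ h) (hx : x ∈ m) {γ : ℝ} (hAx : A x = γ • x) :
      A ⁅Z, x⁆ = γ • ⁅Z, x⁆ :=
    apply_lie_eq_smul_lie hBinv hadm hΦpos hΦinv hAm hAB hZ hx hAx
  obtain ⟨Z, hZ, hZe⟩ := exists_smul_lie_eq hB hBinv hBπ hadm hΦ hΦpos hΦinv hπmem hπid hgeod
    hAm hAB hX hY hXY hα hβ hαβ hXe hYe
  obtain ⟨Z', hZ', hZ'e⟩ := exists_smul_lie_eq hB hBinv hBπ hadm hΦ hΦpos hΦinv hπmem hπid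
    hgeod hAm hAB hX (neg_mem hY) (by rw [lie_neg]; exact neg_mem hXY) hα hβ hαβ hXe
    (by rw [map_neg, hYe, smul_neg])
  rw [lie_neg, lie_neg] at hZ'e
  have hadd : Z + Z' ∈ h := add_mem hZ hZ'
  have hsub : Z - Z' ∈ h := sub_mem hZ hZ'
  obtain ⟨hcentX, hcentY⟩ : ⁅Z + Z', X⁆ = 0 ∧ ⁅Z - Z', Y⁆ = 0 := by
    refine eq_zero_of_smul_add_smul_eq_zero hΦ hΦpos (hadm _ hadd X hX)
      (bilinForm_eq_zero_of_eigenvalue_ne hB hΦ hAB (hadm _ hadd X hX) (hadm _ hsub Y hY) hαβ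
        (hcomm hadd hX hXe) (hcomm hsub hY hYe)) (div_ne_zero hβ hα) (div_ne_zero hα hβ) ?_
    rw [add_lie, sub_lie]
    linear_combination (norm := module) -hZe - hZ'e
  have hdiff : (2 * (β - α)) • ⁅X, Y⁆ = (β / α) • ⁅Z - Z', X⁆ + (α / β) • ⁅Z + Z', Y⁆ := by
    rw [add_lie, sub_lie]
    linear_combination (norm := module) hZe - hZ'e
  have hc : 2 * (β - α) ≠ 0 := mul_ne_zero two_ne_zero (sub_ne_zero.mpr hαβ.symm)
  refine ⟨(2 * (β - α))⁻¹ • (α / β) • (Z + Z'), h.smul_mem _ (h.smul_mem _ hadd),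
    (2 * (β - α))⁻¹ • (β / α) • (Z - Z'), h.smul_mem _ (h.smul_mem _ hsub),
    by rw [smul_lie, smul_lie, hcentX, smul_zero, smul_zero],
    by rw [smul_lie, smul_lie, hcentY, smul_zero, smul_zero], ?_⟩
  rw [smul_lie, smul_lie, smul_lie, smul_lie, ← smul_add, ← hdiff, smul_smul,
    inv_mul_cancel₀ hc, one_smul]

end Lie

/-- In the GO setting with `𝔪 = {X : B(X,𝔥)=0}` and eigenvectors `X ∈ A_α`,
`Y ∈ A_β`, `0 ≠ α ≠ β ≠ 0`: there exist `Z₁ ∈ C_𝔥(X)`, `Z₂ ∈ C_𝔥(Y)` with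
`[X,Y] = [Z₂,X] + [Z₁,Y]`. In particular, if `C_𝔥(X) = 0` then `[X,Y] ∈ A_α`, if `C_𝔥(Y) = 0`
then `[X,Y] ∈ A_β`, and if both vanish then `[X,Y] = 0`. -/
theorem go_space_bracket_of_eigenspaces_centralizers
    (L : Type*) [LieRing L] [LieAlgebra ℝ L] [FiniteDimensional ℝ L]
    (h : LieSubalgebra ℝ L) (m : Submodule ℝ L)
    (hcompl : IsCompl h.toSubmodule m)
    (hmchar : ∀ x : L, x ∈ m ↔ ∀ W ∈ h, killingForm ℝ L x W = 0)
    (hadm : ∀ Z ∈ h, ∀ x ∈ m, ⁅Z, x⁆ ∈ m)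
    (Φ : LinearMap.BilinForm ℝ L)
    (hΦsymm : ∀ x y : L, Φ x y = Φ y x)
    (hΦpos : ∀ x ∈ m, x ≠ 0 → 0 < Φ x x)
    (hΦinv : ∀ Z ∈ h, ∀ x ∈ m, ∀ y ∈ m, Φ ⁅Z, x⁆ y + Φ x ⁅Z, y⁆ = 0)
    (πm : L →ₗ[ℝ] L)
    (hπmem : ∀ x : L, πm x ∈ m) (hπid : ∀ x ∈ m, πm x = x) (hπh : ∀ x ∈ h, πm x = 0)
    (hGO : ∀ X ∈ m, ∃ Z ∈ h, ∀ W ∈ m, Φ (πm ⁅X + Z, W⁆) X = 0)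
    (A : L →ₗ[ℝ] L)
    (hAm : ∀ x ∈ m, A x ∈ m)
    (hAB : ∀ x ∈ m, ∀ y ∈ m, killingForm ℝ L x y = Φ (A x) y)
    (α β : ℝ) (hα : α ≠ 0) (hβ : β ≠ 0) (hαβ : α ≠ β)
    (X : L) (hX : X ∈ m) (hXe : A X = α • X)
    (Y : L) (hY : Y ∈ m) (hYe : A Y = β • Y) :
    (∃ Z₁ ∈ h, ∃ Z₂ ∈ h, ⁅Z₁, X⁆ = 0 ∧ ⁅Z₂, Y⁆ = 0 ∧ ⁅X, Y⁆ = ⁅Z₂, X⁆ + ⁅Z₁, Y⁆) ∧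
      ((∀ Z ∈ h, ⁅Z, X⁆ = 0 → Z = 0) → ⁅X, Y⁆ ∈ m ∧ A ⁅X, Y⁆ = α • ⁅X, Y⁆) ∧
      ((∀ Z ∈ h, ⁅Z, Y⁆ = 0 → Z = 0) → ⁅X, Y⁆ ∈ m ∧ A ⁅X, Y⁆ = β • ⁅X, Y⁆) ∧
      ((∀ Z ∈ h, ⁅Z, X⁆ = 0 → Z = 0) → (∀ Z ∈ h, ⁅Z, Y⁆ = 0 → Z = 0) → ⁅X, Y⁆ = 0) := by
  have hB := LieModule.traceForm_comm ℝ L L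
  have hBinv := LieModule.traceForm_apply_lie_apply ℝ L L
  have hBπ : ∀ x ∈ m, ∀ u, killingForm ℝ L x (πm u) = killingForm ℝ L x u :=
    fun _ hx => bilinForm_apply_proj hcompl hπid hπh (fun x hx => (hmchar x).mp hx) hx
  have hgeod := exists_bilinForm_proj_lie_eq_of_go hadm hΦsymm hΦinv hπid hGO
  have hXY : ⁅X, Y⁆ ∈ m := lie_mem_of_eigenvalue_ne hB hBinv (fun x => (hmchar x).mpr) hadm
    hΦsymm hΦpos hΦinv hAm hAB hX hY hαβ hXe hYe
  obtain ⟨Z₁, hZ₁, Z₂, hZ₂, hZ₁X, hZ₂Y, hbr⟩ := exists_centralizer_lie_eq hB hBinv hBπ hadm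
    hΦsymm hΦpos hΦinv hπmem hπid hgeod hAm hAB hX hY hXY hα hβ hαβ hXe hYe
  have hZ₂X := apply_lie_eq_smul_lie hBinv hadm hΦpos hΦinv hAm hAB hZ₂ hX hXe
  have hZ₁Y := apply_lie_eq_smul_lie hBinv hadm hΦpos hΦinv hAm hAB hZ₁ hY hYe
  refine ⟨⟨Z₁, hZ₁, Z₂, hZ₂, hZ₁X, hZ₂Y, hbr⟩, fun hX0 => ?_, fun hY0 => ?_, fun hX0 hY0 => ?_⟩
  · rw [hbr, hX0 Z₁ hZ₁ hZ₁X, zero_lie, add_zero]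
    exact ⟨hadm Z₂ hZ₂ X hX, hZ₂X⟩
  · rw [hbr, hY0 Z₂ hZ₂ hZ₂Y, zero_lie, zero_add]
    exact ⟨hadm Z₁ hZ₁ Y hY, hZ₁Y⟩
  · rw [hbr, hX0 Z₁ hZ₁ hZ₁X, hY0 Z₂ hZ₂ hZ₂Y, zero_lie, zero_lie, add_zero]
end

section
/- Let $(G/H,\rho)$ satisfy the GO-property with reductive decomposition $\mathfrak{g}=\mathfrak{h}\oplus\mathfrak{m}$, $B(\mathfrak{h},\mathfrak{m})=0$, operator $A$ as above, and let $\mathfrak{p}$ be an $\operatorname{ad}(\mathfrak{h})$-invariant subspace of an eigenspace $A_\alpha$, $\alpha\neq 0$. If for a dense set of $X \in \mathfrak{p}$ the centralizer $C_{\mathfrak{h}}(X)$ is trivial (i.e., the principal isotropy algebra of the isotropy representation on $\mathfrak{p}$ is trivial), then $[A_\beta, \mathfrak{p}] \subseteq \mathfrak{p}$ for every eigenvalue $\beta$ with $0 \neq \beta \neq \alpha$. -/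
/-- GO setting with `𝔪 = {X : B(X,𝔥)=0}` and an `ad 𝔥`-invariant subspace
`𝔭 ⊆ A_α`, `α ≠ 0`. If the centralizer `C_𝔥(X)` is trivial for a dense set of `X ∈ 𝔭` (trivial
principal isotropy algebra of the isotropy representation on `𝔭`), then `[A_β,𝔭] ⊆ 𝔭` for every
eigenvalue `β` with `0 ≠ β ≠ α`. -/
theorem go_space_trivial_principal_isotropy_bracket
    (L : Type*) [LieRing L] [LieAlgebra ℝ L] [FiniteDimensional ℝ L]
    [TopologicalSpace L] [IsTopologicalAddGroup L] [ContinuousSMul ℝ L] [T2Space L]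
    (h : LieSubalgebra ℝ L) (m : Submodule ℝ L)
    (hcompl : IsCompl h.toSubmodule m)
    (hmchar : ∀ x : L, x ∈ m ↔ ∀ W ∈ h, killingForm ℝ L x W = 0)
    (hadm : ∀ Z ∈ h, ∀ x ∈ m, ⁅Z, x⁆ ∈ m)
    (Φ : LinearMap.BilinForm ℝ L)
    (hΦsymm : ∀ x y : L, Φ x y = Φ y x)
    (hΦpos : ∀ x ∈ m, x ≠ 0 → 0 < Φ x x)
    (hΦinv : ∀ Z ∈ h, ∀ x ∈ m, ∀ y ∈ m, Φ ⁅Z, x⁆ y + Φ x ⁅Z, y⁆ = 0)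
    (πm : L →ₗ[ℝ] L)
    (hπmem : ∀ x : L, πm x ∈ m) (hπid : ∀ x ∈ m, πm x = x) (hπh : ∀ x ∈ h, πm x = 0)
    (hGO : ∀ X ∈ m, ∃ Z ∈ h, ∀ W ∈ m, Φ (πm ⁅X + Z, W⁆) X = 0)
    (A : L →ₗ[ℝ] L)
    (hAm : ∀ x ∈ m, A x ∈ m)
    (hAB : ∀ x ∈ m, ∀ y ∈ m, killingForm ℝ L x y = Φ (A x) y)
    (α : ℝ) (hα : α ≠ 0)
    (p : Submodule ℝ L) (hpm : p ≤ m)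
    (hpe : ∀ x ∈ p, A x = α • x)
    (hpinv : ∀ Z ∈ h, ∀ x ∈ p, ⁅Z, x⁆ ∈ p)
    -- trivial principal isotropy algebra: a dense subset of `𝔭` has trivial centralizer in `𝔥`
    (D : Set L) (hDp : D ⊆ (p : Set L)) (hDdense : closure D = (p : Set L))
    (hDtriv : ∀ X ∈ D, ∀ Z ∈ h, ⁅Z, X⁆ = 0 → Z = 0) :
    ∀ β : ℝ, β ≠ 0 → β ≠ α →
      ∀ Y ∈ m, A Y = β • Y → ∀ X ∈ p, ⁅Y, X⁆ ∈ p := by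
  intro β hβ0 hβα Y hYm hAY
  classical
  have hαβ : α ≠ β := hβα.symm
  -- basic killing form facts
  have hκsymm : ∀ x y : L, killingForm ℝ L x y = killingForm ℝ L y x :=
    fun x y => LieModule.traceForm_comm ℝ L L x y
  have hκlie : ∀ x y z : L, killingForm ℝ L ⁅x, y⁆ z = killingForm ℝ L x ⁅y, z⁆ :=
    fun x y z => LieModule.traceForm_apply_lie_apply ℝ L L x y z
  have hdecomp : ∀ y : L, ∃ a ∈ h.toSubmodule, ∃ b ∈ m, a + b = y := by
    intro y
    have hy : y ∈ h.toSubmodule ⊔ m := by rw [hcompl.sup_eq_top]; trivial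
    exact Submodule.mem_sup.mp hy
  have hproj : ∀ x : L, x - πm x ∈ h := by
    intro x
    obtain ⟨a, ha, b, hb, rfl⟩ := hdecomp x
    have hπ : πm (a + b) = b := by
      rw [map_add, hπh a ha, hπid b hb, zero_add]
    rw [hπ, add_sub_cancel_right]
    exact ha
  have hκπ : ∀ x ∈ m, ∀ u : L, killingForm ℝ L x u = killingForm ℝ L x (πm u) := by
    intro x hx u
    have h1 : killingForm ℝ L x (u - πm u) = 0 := (hmchar x).mp hx _ (hproj u)
    have h2 : killingForm ℝ L x (u - πm u)
        = killingForm ℝ L x u - killingForm ℝ L x (πm u) := map_sub _ _ _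
    linarith
  have heig : ∀ u ∈ m, ∀ γ : ℝ, A u = γ • u → ∀ v ∈ m,
      killingForm ℝ L u v = γ * Φ u v := by
    intro u hu γ hAu v hv
    rw [hAB u hu v hv, hAu, map_smul, LinearMap.smul_apply, smul_eq_mul]
  have hcancel : ∀ a ∈ m, ∀ b ∈ m, (∀ W ∈ m, Φ a W = Φ b W) → a = b := by
    intro a ha b hb hab
    by_contra hne
    have hsub : a - b ∈ m := sub_mem ha hb
    have h1 : Φ (a - b) (a - b) = 0 := by
      have h3 : Φ (a - b) (a - b) = Φ a (a - b) - Φ b (a - b) := by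
        rw [map_sub Φ a b, LinearMap.sub_apply]
      rw [h3, hab (a - b) hsub, sub_self]
    have h2 := hΦpos (a - b) hsub (sub_ne_zero.mpr hne)
    linarith
  have hcross : ∀ a ∈ m, ∀ b ∈ m, ∀ γ δ : ℝ, A a = γ • a → A b = δ • b → γ ≠ δ →
      Φ a b = 0 := by
    intro a ha b hb γ δ hAa hAb hne
    have h1 : killingForm ℝ L a b = γ * Φ a b := heig a ha γ hAa b hb
    have h2 : killingForm ℝ L b a = δ * Φ b a := heig b hb δ hAb a ha
    rw [hκsymm a b, h2, hΦsymm b a] at h1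
    have h3 : (γ - δ) * Φ a b = 0 := by linear_combination -h1
    exact (mul_eq_zero.mp h3).resolve_left (sub_ne_zero.mpr hne)
  have hsplit : ∀ (a b : L) (γ δ : ℝ), γ ≠ δ → A a = γ • a → A b = δ • b →
      a + b = 0 → a = 0 ∧ b = 0 := by
    intro a b γ δ hne hAa hAb hab
    have hb : b = -a := eq_neg_of_add_eq_zero_right hab
    rw [hb, map_neg, hAa, smul_neg] at hAb
    have h4 : γ • a = δ • a := neg_injective hAb
    have h5 : (γ - δ) • a = 0 := by rw [sub_smul, h4, sub_self]
    have ha0 : a = 0 := by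
      rcases smul_eq_zero.mp h5 with hc | hc
      · exact absurd hc (sub_ne_zero.mpr hne)
      · exact hc
    exact ⟨ha0, by rw [hb, ha0, neg_zero]⟩
  have hequiv : ∀ Z ∈ h, ∀ u ∈ m, ∀ γ : ℝ, A u = γ • u →
      A ⁅Z, u⁆ = γ • ⁅Z, u⁆ := by
    intro Z hZ u hu γ hAu
    have hZu : ⁅Z, u⁆ ∈ m := hadm Z hZ u hu
    refine hcancel _ (hAm _ hZu) _ (Submodule.smul_mem m γ hZu) ?_
    intro W hW
    have e1 : Φ (A ⁅Z, u⁆) W = killingForm ℝ L ⁅Z, u⁆ W := (hAB _ hZu W hW).symm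
    have e2 : killingForm ℝ L ⁅Z, u⁆ W = -killingForm ℝ L u ⁅Z, W⁆ := by
      rw [show (⁅Z, u⁆ : L) = -⁅u, Z⁆ from (lie_skew Z u).symm, map_neg,
        LinearMap.neg_apply, hκlie u Z W]
    have e3 : killingForm ℝ L u ⁅Z, W⁆ = γ * Φ u ⁅Z, W⁆ :=
      heig u hu γ hAu _ (hadm Z hZ W hW)
    have e4 : Φ ⁅Z, u⁆ W + Φ u ⁅Z, W⁆ = 0 := hΦinv Z hZ u hu W hW
    have e5 : Φ (γ • ⁅Z, u⁆) W = γ * Φ ⁅Z, u⁆ W := by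
      rw [map_smul, LinearMap.smul_apply, smul_eq_mul]
    rw [e1, e2, e3, e5]
    linear_combination (-γ) * e4
  -- the key claim for X in the dense set D
  have key : ∀ X ∈ D, ⁅Y, X⁆ ∈ p := by
    intro X hXD
    have hXp : X ∈ p := hDp hXD
    have hXm : X ∈ m := hpm hXp
    have hXeig : A X = α • X := hpe X hXp
    have hinj : ∀ Z ∈ h, ⁅Z, X⁆ = 0 → Z = 0 := hDtriv X hXD
    -- ⁅X, Y⁆ ∈ m
    have hvm : (⁅X, Y⁆ : L) ∈ m := by
      rw [hmchar]
      intro W hW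
      have hWY : (⁅W, Y⁆ : L) ∈ m := hadm W hW Y hYm
      have hWX : (⁅W, X⁆ : L) ∈ m := hadm W hW X hXm
      have c1 : killingForm ℝ L ⁅X, Y⁆ W = α * Φ Y ⁅W, X⁆ := by
        rw [hκlie X Y W, show (⁅Y, W⁆ : L) = -⁅W, Y⁆ from (lie_skew Y W).symm, map_neg,
          heig X hXm α hXeig _ hWY]
        have h2 : Φ ⁅W, X⁆ Y + Φ X ⁅W, Y⁆ = 0 := hΦinv W hW X hXm Y hYm
        have h3 : Φ ⁅W, X⁆ Y = Φ Y ⁅W, X⁆ := hΦsymm _ _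
        linear_combination (-α) * h2 + α * h3
      have c2 : killingForm ℝ L ⁅X, Y⁆ W = β * Φ Y ⁅W, X⁆ := by
        rw [show (⁅X, Y⁆ : L) = -⁅Y, X⁆ from (lie_skew X Y).symm, map_neg,
          LinearMap.neg_apply, hκlie Y X W,
          show (⁅X, W⁆ : L) = -⁅W, X⁆ from (lie_skew X W).symm, map_neg,
          heig Y hYm β hAY _ hWX]
        ring
      have h3 : α * Φ Y ⁅W, X⁆ = β * Φ Y ⁅W, X⁆ := c1.symm.trans c2
      have h4 : (α - β) * Φ Y ⁅W, X⁆ = 0 := by linear_combination h3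
      have ht : Φ Y ⁅W, X⁆ = 0 := (mul_eq_zero.mp h4).resolve_left (sub_ne_zero.mpr hαβ)
      rw [c1, ht, mul_zero]
    -- the self term vanishes
    have hLA : ∀ u ∈ m, ∀ γ : ℝ, γ ≠ 0 → A u = γ • u → ∀ W ∈ m,
        Φ (πm ⁅u, W⁆) u = 0 := by
      intro u hu γ hγ hAu W hW
      have h1 : killingForm ℝ L u (πm ⁅u, W⁆) = γ * Φ u (πm ⁅u, W⁆) :=
        heig u hu γ hAu _ (hπmem _)
      have h2 : killingForm ℝ L u (πm ⁅u, W⁆) = 0 := by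
        rw [← hκπ u hu ⁅u, W⁆, ← hκlie u u W, lie_self]
        simp
      have h3 : Φ u (πm ⁅u, W⁆) = 0 :=
        (mul_eq_zero.mp (h1.symm.trans h2)).resolve_left hγ
      rw [hΦsymm, h3]
    -- GO equation at X + t • Y
    have hstar2 : ∀ t : ℝ, ∃ Z ∈ h,
        (t * (α⁻¹ - β⁻¹)) • A ⁅X, Y⁆ = ⁅Z, X⁆ + t • ⁅Z, Y⁆ := by
      intro t
      obtain ⟨Z, hZ, hZgo⟩ := hGO (X + t • Y) (add_mem hXm (Submodule.smul_mem m t hYm))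
      refine ⟨Z, hZ, ?_⟩
      have hZX : (⁅Z, X⁆ : L) ∈ m := hadm Z hZ X hXm
      have hZY : (⁅Z, Y⁆ : L) ∈ m := hadm Z hZ Y hYm
      refine hcancel _ (Submodule.smul_mem m _ (hAm _ hvm)) _
        (add_mem hZX (Submodule.smul_mem m t hZY)) ?_
      intro W hW
      have hZW : (⁅Z, W⁆ : L) ∈ m := hadm Z hZ W hW
      have h0 := hZgo W hW
      have hexp : (⁅X + t • Y + Z, W⁆ : L) = ⁅X, W⁆ + t • ⁅Y, W⁆ + ⁅Z, W⁆ := by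
        simp [add_lie, smul_lie]
      rw [hexp] at h0
      simp only [map_add, map_smul, hπid _ hZW, LinearMap.add_apply,
        LinearMap.smul_apply, smul_eq_mul] at h0
      have A1 : Φ (πm ⁅X, W⁆) X = 0 := hLA X hXm α hα hXeig W hW
      have A4 : Φ (πm ⁅Y, W⁆) Y = 0 := hLA Y hYm β hβ0 hAY W hW
      have A2 : Φ (πm ⁅X, W⁆) Y = -(β⁻¹ * killingForm ℝ L ⁅X, Y⁆ W) := by
        have e1 : killingForm ℝ L Y ⁅X, W⁆ = β * Φ Y (πm ⁅X, W⁆) := by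
          rw [hκπ Y hYm ⁅X, W⁆]; exact heig Y hYm β hAY _ (hπmem _)
        have e3 : killingForm ℝ L ⁅Y, X⁆ W = killingForm ℝ L Y ⁅X, W⁆ := hκlie Y X W
        have e4 : killingForm ℝ L ⁅Y, X⁆ W = -killingForm ℝ L ⁅X, Y⁆ W := by
          rw [show (⁅Y, X⁆ : L) = -⁅X, Y⁆ from (lie_skew Y X).symm, map_neg,
            LinearMap.neg_apply]
        have e5 : β * Φ Y (πm ⁅X, W⁆) = -killingForm ℝ L ⁅X, Y⁆ W := by
          rw [← e1, ← e3]; exact e4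
        rw [hΦsymm]
        field_simp
        linear_combination e5
      have A3 : Φ (πm ⁅Y, W⁆) X = α⁻¹ * killingForm ℝ L ⁅X, Y⁆ W := by
        have e1 : killingForm ℝ L X ⁅Y, W⁆ = α * Φ X (πm ⁅Y, W⁆) := by
          rw [hκπ X hXm ⁅Y, W⁆]; exact heig X hXm α hXeig _ (hπmem _)
        have e3 : killingForm ℝ L ⁅X, Y⁆ W = killingForm ℝ L X ⁅Y, W⁆ := hκlie X Y W
        rw [hΦsymm]
        field_simp
        linear_combination -(e3.trans e1)
      have A5 : Φ ⁅Z, W⁆ X = -Φ ⁅Z, X⁆ W := by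
        have e1 := hΦinv Z hZ W hW X hXm
        have e2 : Φ W ⁅Z, X⁆ = Φ ⁅Z, X⁆ W := hΦsymm _ _
        linarith
      have A6 : Φ ⁅Z, W⁆ Y = -Φ ⁅Z, Y⁆ W := by
        have e1 := hΦinv Z hZ W hW Y hYm
        have e2 : Φ W ⁅Z, Y⁆ = Φ ⁅Z, Y⁆ W := hΦsymm _ _
        linarith
      have hK : killingForm ℝ L ⁅X, Y⁆ W = Φ (A ⁅X, Y⁆) W := hAB _ hvm W hW
      simp only [map_add, map_smul, LinearMap.add_apply, LinearMap.smul_apply, smul_eq_mul]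
      linear_combination h0 - A1 - t * A2 - t * A3 - t ^ 2 * A4 - A5 - t * A6
        - (t * (α⁻¹ - β⁻¹)) * hK
    set c : ℝ := α⁻¹ - β⁻¹ with hc
    have hcne : c ≠ 0 := sub_ne_zero.mpr fun hcc => hαβ (inv_inj.mp hcc)
    obtain ⟨Z1, hZ1, he1⟩ := hstar2 1
    obtain ⟨Z2, hZ2, he2⟩ := hstar2 2
    rw [one_mul, one_smul] at he1
    -- split in eigenspaces
    have hsum : ((2 : ℝ) • ⁅Z1, X⁆ - ⁅Z2, X⁆) + ((2 : ℝ) • ⁅Z1, Y⁆ - (2 : ℝ) • ⁅Z2, Y⁆)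
        = 0 := by
      have h2e : (2 : ℝ) • (c • A ⁅X, Y⁆) = (2 * c) • A ⁅X, Y⁆ := by
        rw [smul_smul]
      linear_combination (norm := module) he2 + h2e - (2 : ℝ) • he1
    have hZ1Xp : (⁅Z1, X⁆ : L) ∈ p := hpinv Z1 hZ1 X hXp
    have hZ2Xp : (⁅Z2, X⁆ : L) ∈ p := hpinv Z2 hZ2 X hXp
    have hAa : A ((2 : ℝ) • ⁅Z1, X⁆ - ⁅Z2, X⁆)
        = α • ((2 : ℝ) • ⁅Z1, X⁆ - ⁅Z2, X⁆) :=
      hpe _ (sub_mem (Submodule.smul_mem p 2 hZ1Xp) hZ2Xp)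
    have hAb : A ((2 : ℝ) • ⁅Z1, Y⁆ - (2 : ℝ) • ⁅Z2, Y⁆)
        = β • ((2 : ℝ) • ⁅Z1, Y⁆ - (2 : ℝ) • ⁅Z2, Y⁆) := by
      rw [map_sub, map_smul, map_smul, hequiv Z1 hZ1 Y hYm β hAY,
        hequiv Z2 hZ2 Y hYm β hAY]
      module
    obtain ⟨ha0, hb0⟩ := hsplit _ _ α β hαβ hAa hAb hsum
    have hZ12h : (2 : ℝ) • Z1 - Z2 ∈ h := sub_mem (h.smul_mem 2 hZ1) hZ2
    have hZ2eq : Z2 = (2 : ℝ) • Z1 := by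
      have hl : (⁅(2 : ℝ) • Z1 - Z2, X⁆ : L) = (2 : ℝ) • ⁅Z1, X⁆ - ⁅Z2, X⁆ := by
        rw [sub_lie, smul_lie]
      have := hinj _ hZ12h (by rw [hl]; exact ha0)
      exact (sub_eq_zero.mp this).symm
    have hZ1Y : (⁅Z1, Y⁆ : L) = 0 := by
      rw [hZ2eq, smul_lie] at hb0
      have h2 : (-2 : ℝ) • (⁅Z1, Y⁆ : L) = 0 := by rw [← hb0]; module
      simpa using h2
    have hAveq : A ⁅X, Y⁆ = c⁻¹ • ⁅Z1, X⁆ := by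
      rw [hZ1Y, add_zero] at he1
      rw [← he1, smul_smul, inv_mul_cancel₀ hcne, one_smul]
    have hAvp : A ⁅X, Y⁆ ∈ p := by
      rw [hAveq]; exact Submodule.smul_mem p _ hZ1Xp
    -- q and d
    set q : L := α⁻¹ • A ⁅X, Y⁆ with hq
    have hqp : q ∈ p := Submodule.smul_mem p _ hAvp
    have hAq : A q = A ⁅X, Y⁆ := by
      rw [hpe q hqp, hq, smul_smul, mul_inv_cancel₀ hα, one_smul]
    set d : L := ⁅X, Y⁆ - q with hd
    have hdm : d ∈ m := sub_mem hvm (hpm hqp)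
    have hAd : A d = 0 := by rw [hd, map_sub, hAq, sub_self]
    have hAd' : A d = (0 : ℝ) • d := by rw [zero_smul]; exact hAd
    have hκd : ∀ y : L, killingForm ℝ L d y = 0 := by
      intro y
      obtain ⟨a, ha, b, hb, rfl⟩ := hdecomp y
      have h1 : killingForm ℝ L d a = 0 := (hmchar d).mp hdm a ha
      have h2 : killingForm ℝ L d b = 0 := by
        rw [hAB d hdm b hb, hAd, map_zero, LinearMap.zero_apply]
      rw [map_add, h1, h2, add_zero]
    -- Riesz representation on m
    have riesz : ∀ u v : L, ∃ F ∈ m, ∀ W ∈ m, Φ F W = Φ (πm ⁅u, W⁆) v := by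
      intro u v
      let g : L →ₗ[ℝ] ℝ := (Φ.flip v).comp (πm.comp (LieAlgebra.ad ℝ L u))
      have hg : ∀ W : L, g W = Φ (πm ⁅u, W⁆) v := by
        intro W
        simp [g, LinearMap.flip_apply, LieAlgebra.ad_apply]
      let Φm : LinearMap.BilinForm ℝ m := Φ.compl₁₂ m.subtype m.subtype
      have hnd : Φm.Nondegenerate := by
        refine ⟨?_, ?_⟩
        all_goals
          intro x hx
          by_contra hne
          have hx0 : (x : L) ≠ 0 := fun hcc => hne (Subtype.ext hcc)
          have hpos := hΦpos (x : L) x.2 hx0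
          have hxx := hx x
          simp only [Φm, LinearMap.compl₁₂_apply, Submodule.coe_subtype] at hxx
          linarith
      set Fm : m := (Φm.toDual hnd).symm (g.comp m.subtype) with hFm
      refine ⟨(Fm : L), Fm.2, ?_⟩
      intro W hW
      have h1 : (Φm.toDual hnd) Fm = g.comp m.subtype :=
        LinearEquiv.apply_symm_apply _ _
      have h2 := congrArg (fun φ => φ (⟨W, hW⟩ : m)) h1
      simp only [LinearMap.BilinForm.toDual_def, LinearMap.comp_apply,
        Submodule.subtype_apply] at h2
      have h3 : Φm Fm (⟨W, hW⟩ : m) = Φ (Fm : L) W := by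
        simp [Φm, LinearMap.compl₁₂_apply]
      rw [← hg W, ← h3]
      exact h2
    obtain ⟨F, hFmem, hFdef⟩ := riesz X d
    obtain ⟨H, hHmem, hHdef⟩ := riesz d d
    -- GO equation at X + s • d
    have hstar : ∀ s : ℝ, ∃ U ∈ h,
        s • F + (s ^ 2) • H = ⁅U, X⁆ + s • ⁅U, d⁆ := by
      intro s
      obtain ⟨Z, hZ, hZgo⟩ := hGO (X + s • d) (add_mem hXm (Submodule.smul_mem m s hdm))
      refine ⟨Z, hZ, ?_⟩
      have hZX : (⁅Z, X⁆ : L) ∈ m := hadm Z hZ X hXm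
      have hZd : (⁅Z, d⁆ : L) ∈ m := hadm Z hZ d hdm
      refine hcancel _ (add_mem (Submodule.smul_mem m s hFmem)
        (Submodule.smul_mem m _ hHmem)) _
        (add_mem hZX (Submodule.smul_mem m s hZd)) ?_
      intro W hW
      have hZW : (⁅Z, W⁆ : L) ∈ m := hadm Z hZ W hW
      have h0 := hZgo W hW
      have hexp : (⁅X + s • d + Z, W⁆ : L) = ⁅X, W⁆ + s • ⁅d, W⁆ + ⁅Z, W⁆ := by
        simp [add_lie, smul_lie]
      rw [hexp] at h0
      simp only [map_add, map_smul, hπid _ hZW, LinearMap.add_apply,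
        LinearMap.smul_apply, smul_eq_mul] at h0
      have A1 : Φ (πm ⁅X, W⁆) X = 0 := hLA X hXm α hα hXeig W hW
      have B2 : Φ (πm ⁅X, W⁆) d = Φ F W := (hFdef W hW).symm
      have B4 : Φ (πm ⁅d, W⁆) d = Φ H W := (hHdef W hW).symm
      have B3 : Φ (πm ⁅d, W⁆) X = 0 := by
        have e1 : killingForm ℝ L X ⁅d, W⁆ = α * Φ X (πm ⁅d, W⁆) := by
          rw [hκπ X hXm ⁅d, W⁆]; exact heig X hXm α hXeig _ (hπmem _)
        have e2 : killingForm ℝ L X ⁅d, W⁆ = 0 := by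
          rw [← hκlie X d W, show (⁅X, d⁆ : L) = -⁅d, X⁆ from (lie_skew X d).symm,
            map_neg, LinearMap.neg_apply, hκlie d X W, hκd ⁅X, W⁆, neg_zero]
        have h3 : Φ X (πm ⁅d, W⁆) = 0 :=
          (mul_eq_zero.mp (e1.symm.trans e2)).resolve_left hα
        rw [hΦsymm, h3]
      have A5 : Φ ⁅Z, W⁆ X = -Φ ⁅Z, X⁆ W := by
        have e1 := hΦinv Z hZ W hW X hXm
        have e2 : Φ W ⁅Z, X⁆ = Φ ⁅Z, X⁆ W := hΦsymm _ _
        linarith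
      have A6 : Φ ⁅Z, W⁆ d = -Φ ⁅Z, d⁆ W := by
        have e1 := hΦinv Z hZ W hW d hdm
        have e2 : Φ W ⁅Z, d⁆ = Φ ⁅Z, d⁆ W := hΦsymm _ _
        linarith
      simp only [map_add, map_smul, LinearMap.add_apply, LinearMap.smul_apply, smul_eq_mul]
      linear_combination h0 - A1 - s * B2 - s * B3 - s ^ 2 * B4 - A5 - s * A6
    obtain ⟨U1, hU1, hE1⟩ := hstar 1
    obtain ⟨U2, hU2, hE2⟩ := hstar 2
    obtain ⟨U3, hU3, hE3⟩ := hstar 3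
    set Fp : L := (2 : ℝ) • ⁅U1, X⁆ - (2⁻¹ : ℝ) • ⁅U2, X⁆ with hFp
    set Hp : L := (2⁻¹ : ℝ) • ⁅U2, X⁆ - ⁅U1, X⁆ with hHp
    set F0 : L := (2 : ℝ) • ⁅U1, d⁆ - ⁅U2, d⁆ with hF0
    set H0 : L := ⁅U2, d⁆ - ⁅U1, d⁆ with hH0
    have hFdecomp : F = Fp + F0 := by
      rw [hFp, hF0]
      linear_combination (norm := module) (2 : ℝ) • hE1 - (2⁻¹ : ℝ) • hE2
    have hHdecomp : H = Hp + H0 := by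
      rw [hHp, hH0]
      linear_combination (norm := module) (2⁻¹ : ℝ) • hE2 - hE1
    have hFpp : Fp ∈ p := sub_mem (Submodule.smul_mem p _ (hpinv U1 hU1 X hXp))
      (Submodule.smul_mem p _ (hpinv U2 hU2 X hXp))
    have hHpp : Hp ∈ p := sub_mem (Submodule.smul_mem p _ (hpinv U2 hU2 X hXp))
      (hpinv U1 hU1 X hXp)
    -- separation of eigencomponents for each s
    have hsep : ∀ s : ℝ, ∀ U ∈ h, s • F + (s ^ 2) • H = ⁅U, X⁆ + s • ⁅U, d⁆ →
        ⁅U, X⁆ = s • Fp + (s ^ 2) • Hp ∧ s • ⁅U, d⁆ = s • F0 + (s ^ 2) • H0 := by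
      intro s U hU heq
      have hUXp : (⁅U, X⁆ : L) ∈ p := hpinv U hU X hXp
      have haeig : A (s • Fp + (s ^ 2) • Hp - ⁅U, X⁆)
          = α • (s • Fp + (s ^ 2) • Hp - ⁅U, X⁆) :=
        hpe _ (sub_mem (add_mem (Submodule.smul_mem p _ hFpp)
          (Submodule.smul_mem p _ hHpp)) hUXp)
      have hAUd : A ⁅U, d⁆ = 0 := by
        have := hequiv U hU d hdm 0 hAd'
        rwa [zero_smul] at this
      have hAU1d : A ⁅U1, d⁆ = 0 := by
        have := hequiv U1 hU1 d hdm 0 hAd'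
        rwa [zero_smul] at this
      have hAU2d : A ⁅U2, d⁆ = 0 := by
        have := hequiv U2 hU2 d hdm 0 hAd'
        rwa [zero_smul] at this
      have hbeig : A (s • F0 + (s ^ 2) • H0 - s • ⁅U, d⁆)
          = (0 : ℝ) • (s • F0 + (s ^ 2) • H0 - s • ⁅U, d⁆) := by
        rw [zero_smul, hF0, hH0]
        simp only [map_add, map_sub, map_smul, hAUd, hAU1d, hAU2d]
        simp
      have hab : (s • Fp + (s ^ 2) • Hp - ⁅U, X⁆)
          + (s • F0 + (s ^ 2) • H0 - s • ⁅U, d⁆) = 0 := by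
        rw [hFdecomp, hHdecomp] at heq
        linear_combination (norm := module) heq
      obtain ⟨h1, h2⟩ := hsplit _ _ α 0 hα haeig hbeig hab
      constructor
      · have := sub_eq_zero.mp h1
        exact this.symm
      · have := sub_eq_zero.mp h2
        exact this.symm
    have hS1 := hsep 1 U1 hU1 hE1
    have hS2 := hsep 2 U2 hU2 hE2
    have hS3 := hsep 3 U3 hU3 hE3
    set ZF : L := (2 : ℝ) • U1 - (2⁻¹ : ℝ) • U2 with hZF
    set ZH : L := (2⁻¹ : ℝ) • U2 - U1 with hZH
    have hZFh : ZF ∈ h := sub_mem (h.smul_mem 2 hU1) (h.smul_mem _ hU2)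
    have hZHh : ZH ∈ h := sub_mem (h.smul_mem _ hU2) hU1
    have hZFX : (⁅ZF, X⁆ : L) = Fp := by
      rw [hZF, hFp, sub_lie, smul_lie, smul_lie]
    have hZHX : (⁅ZH, X⁆ : L) = Hp := by
      rw [hZH, hHp, sub_lie, smul_lie]
    have hUs : ∀ s : ℝ, ∀ U ∈ h, ⁅U, X⁆ = s • Fp + (s ^ 2) • Hp →
        U = s • ZF + (s ^ 2) • ZH := by
      intro s U hU hUX
      have hmem : U - (s • ZF + (s ^ 2) • ZH) ∈ h :=
        sub_mem hU (add_mem (h.smul_mem s hZFh) (h.smul_mem _ hZHh))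
      have hbr : (⁅U - (s • ZF + (s ^ 2) • ZH), X⁆ : L) = 0 := by
        rw [sub_lie, add_lie, smul_lie, smul_lie, hZFX, hZHX, hUX]
        module
      have := hinj _ hmem hbr
      exact sub_eq_zero.mp this
    have hU1eq := hUs 1 U1 hU1 hS1.1
    have hU2eq := hUs 2 U2 hU2 hS2.1
    have hU3eq := hUs 3 U3 hU3 hS3.1
    -- ⁅U_s, d⁆ = F0 + s • H0
    have hRs : ∀ s : ℝ, s ≠ 0 → ∀ U : L, U = s • ZF + (s ^ 2) • ZH →
        s • ⁅U, d⁆ = s • F0 + (s ^ 2) • H0 →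
        s • ⁅ZF, d⁆ + (s ^ 2) • ⁅ZH, d⁆ = F0 + s • H0 := by
      intro s hs U hUeq hUd
      have h1 : (⁅U, d⁆ : L) = s • ⁅ZF, d⁆ + (s ^ 2) • ⁅ZH, d⁆ := by
        rw [hUeq, add_lie, smul_lie, smul_lie]
      rw [h1] at hUd
      have h2 : s • (s • ⁅ZF, d⁆ + (s ^ 2) • ⁅ZH, d⁆) = s • (F0 + s • H0) := by
        rw [hUd]
        module
      exact smul_right_injective L hs h2
    have hR1 := hRs 1 one_ne_zero U1 hU1eq hS1.2
    have hR2 := hRs 2 two_ne_zero U2 hU2eq hS2.2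
    have hR3 := hRs 3 three_ne_zero U3 hU3eq hS3.2
    have hF0zero : F0 = 0 := by
      linear_combination (norm := module) (-3 : ℝ) • hR1 + (3 : ℝ) • hR2 - hR3
    have hFeqFp : F = Fp := by rw [hFdecomp, hF0zero, add_zero]
    have hFinp : F ∈ p := hFeqFp ▸ hFpp
    -- Φ ⁅X,Y⁆ d = 0
    have hvd : Φ ⁅X, Y⁆ d = 0 := by
      have h1 : Φ F Y = Φ (πm ⁅X, Y⁆) d := hFdef Y hYm
      rw [hπid _ hvm] at h1
      have h2 : Φ F Y = 0 :=
        hcross F (hpm hFinp) Y hYm α β (hpe F hFinp) hAY hαβ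
      rw [← h1, h2]
    have hqd : Φ q d = 0 := hcross q (hpm hqp) d hdm α 0 (hpe q hqp) hAd' hα
    have hdd : Φ d d = 0 := by
      have h3 : Φ d d = Φ ⁅X, Y⁆ d - Φ q d := by
        rw [hd, map_sub Φ, LinearMap.sub_apply]
      rw [h3, hvd, hqd, sub_zero]
    have hd0 : d = 0 := by
      by_contra hne
      have := hΦpos d hdm hne
      rw [hdd] at this
      exact lt_irrefl 0 this
    have hXYp : (⁅X, Y⁆ : L) ∈ p := by
      have : (⁅X, Y⁆ : L) = q := by
        have := sub_eq_zero.mp (hd ▸ hd0)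
        exact this
      rw [this]; exact hqp
    have : (⁅Y, X⁆ : L) = -⁅X, Y⁆ := (lie_skew Y X).symm
    rw [this]
    exact neg_mem hXYp
  -- density argument
  intro X hXp
  have hsubset : (p : Set L) ⊆ {x : L | ⁅Y, x⁆ ∈ p} := by
    rw [← hDdense]
    apply closure_minimal
    · intro x hx
      exact key x hx
    · have hcont : Continuous fun x : L => (⁅Y, x⁆ : L) := by
        have hc := (LieAlgebra.ad ℝ L Y).continuous_of_finiteDimensional
        have : (fun x : L => (⁅Y, x⁆ : L)) = ⇑(LieAlgebra.ad ℝ L Y) := by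
          funext x
          rw [LieAlgebra.ad_apply]
        rw [this]
        exact hc
      have hclosed : IsClosed ((p : Set L)) := Submodule.closed_of_finiteDimensional p
      exact hclosed.preimage hcont
  exact hsubset hXp
end
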